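/- arXiv:2511.12649 — 8 statements merged into one kernel-verified Lean document; each statement's English description precedes it below -/
import Mathlib

section
/- Let p, q be integers with 2 ≤ p < q and let γ be a real number with 0 < γ < γ_{p,q}. Then the function g(u) = 1 − u^{p−1} + γ u^{q−1} has exactly two roots in (0, ∞); denoting them a and A with a < A, one has g(u) > 0 for u ∈ (0,a) ∪ (A,∞) and g(u) < 0 for u ∈ (a,A). -/
/-!
Dividing by `u^{p-1}`, the sign of `g` on `(0, ∞)` is that of
`φ(u) = u^{-(p-1)} - 1 + γ u^{q-p}`, which is strictly convex. A strictly convex function with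
two zeros `a < A` is negative exactly between them and positive outside `[a, A]`.
The bound `γ < γ_{p,q}` is what makes `g` negative at `u = ((q-1)/(q-p))^{1/(p-1)}` (the
minimiser of `g` when `γ = γ_{p,q}`); since `g(0) = 1` and `g(u) → ∞`, the intermediate value
theorem supplies the two zeros.
-/

/-- The critical parameter `γ_{p,q} = ((p−1)/(q−1))·((q−p)/(q−1))^{(q−p)/(p−1)}`. -/
noncomputable def gammaCrit (p q : ℕ) : ℝ :=
  (((p : ℝ) - 1) / ((q : ℝ) - 1)) *
    (((q : ℝ) - (p : ℝ)) / ((q : ℝ) - 1)) ^ (((q : ℝ) - (p : ℝ)) / ((p : ℝ) - 1))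

open Set

namespace StrictConvexOn

variable {s : Set ℝ} {f : ℝ → ℝ} {a A u : ℝ}

theorem neg_of_mem_Ioo_of_eq_zero (hf : StrictConvexOn ℝ s f) (ha : a ∈ s) (hA : A ∈ s)
    (hfa : f a = 0) (hfA : f A = 0) (hu : u ∈ Ioo a A) : f u < 0 := by
  have haA : a < A := hu.1.trans hu.2
  have := hf.lt_on_openSegment ha hA haA.ne (by rwa [openSegment_eq_Ioo haA])
  rwa [hfa, hfA, max_self] at this

theorem pos_of_lt_of_eq_zero (hf : StrictConvexOn ℝ s f) (hu : u ∈ s) (hA : A ∈ s)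
    (hfa : f a = 0) (hfA : f A = 0) (hua : u < a) (haA : a < A) : 0 < f u := by
  have := hf.lt_on_openSegment hu hA (hua.trans haA).ne
    (by rw [openSegment_eq_Ioo (hua.trans haA)]; exact ⟨hua, haA⟩)
  rw [hfa, hfA] at this
  exact (lt_max_iff.mp this).resolve_right (lt_irrefl 0)

theorem pos_of_gt_of_eq_zero (hf : StrictConvexOn ℝ s f) (ha : a ∈ s) (hu : u ∈ s)
    (hfa : f a = 0) (hfA : f A = 0) (haA : a < A) (hAu : A < u) : 0 < f u := by
  have := hf.lt_on_openSegment ha hu (haA.trans hAu).ne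
    (by rw [openSegment_eq_Ioo (haA.trans hAu)]; exact ⟨haA, hAu⟩)
  rw [hfa, hfA] at this
  exact (lt_max_iff.mp this).resolve_left (lt_irrefl 0)

theorem eq_or_eq_of_eq_zero (hf : StrictConvexOn ℝ s f) (ha : a ∈ s) (hA : A ∈ s) (hu : u ∈ s)
    (hfa : f a = 0) (hfA : f A = 0) (haA : a < A) (hfu : f u = 0) : u = a ∨ u = A := by
  rcases lt_trichotomy u a with hua | rfl | hau
  · exact absurd hfu (hf.pos_of_lt_of_eq_zero hu hA hfa hfA hua haA).ne'
  · exact .inl rfl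
  rcases lt_trichotomy u A with huA | rfl | hAu
  · exact absurd hfu (hf.neg_of_mem_Ioo_of_eq_zero ha hA hfa hfA ⟨hau, huA⟩).ne
  · exact .inr rfl
  · exact absurd hfu (hf.pos_of_gt_of_eq_zero ha hu hfa hfA haA hAu).ne'

end StrictConvexOn

def trinomial (m n : ℕ) (γ u : ℝ) : ℝ := 1 - u ^ m + γ * u ^ n

noncomputable def scaledTrinomial (m n : ℕ) (γ u : ℝ) : ℝ := u ^ (-(m : ℤ)) - 1 + γ * u ^ (n - m)

theorem gammaCrit_add_one (m n : ℕ) :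
    gammaCrit (m + 1) (n + 1) = (m / n) * ((n - m) / n) ^ (((n : ℝ) - m) / m) := by
  simp only [gammaCrit, Nat.cast_add, Nat.cast_one, add_sub_cancel_right, add_sub_add_right_eq_sub]

section Trinomial

variable {m n : ℕ} {γ u : ℝ}

theorem continuous_trinomial : Continuous (trinomial m n γ) := by
  unfold trinomial
  fun_prop

theorem trinomial_zero (hm : m ≠ 0) (hn : n ≠ 0) : trinomial m n γ 0 = 1 := by
  simp [trinomial, hm, hn]

theorem trinomial_eq_pow_mul_scaledTrinomial (hmn : m ≤ n) (hu : u ≠ 0) :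
    trinomial m n γ u = u ^ m * scaledTrinomial m n γ u := by
  have hpow : u ^ m * u ^ (n - m) = u ^ n := by rw [← pow_add, Nat.add_sub_cancel' hmn]
  rw [trinomial, scaledTrinomial, zpow_neg, zpow_natCast, mul_add, mul_sub,
    mul_inv_cancel₀ (pow_ne_zero m hu), mul_left_comm, hpow]
  ring

theorem trinomial_pos_iff (hmn : m ≤ n) (hu : 0 < u) :
    0 < trinomial m n γ u ↔ 0 < scaledTrinomial m n γ u := by
  rw [trinomial_eq_pow_mul_scaledTrinomial hmn hu.ne', mul_pos_iff_of_pos_left (pow_pos hu m)]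

theorem trinomial_neg_iff (hmn : m ≤ n) (hu : 0 < u) :
    trinomial m n γ u < 0 ↔ scaledTrinomial m n γ u < 0 := by
  rw [trinomial_eq_pow_mul_scaledTrinomial hmn hu.ne']
  exact ⟨fun h => neg_of_mul_neg_right h (pow_pos hu m).le, mul_neg_of_pos_of_neg (pow_pos hu m)⟩

theorem trinomial_eq_zero_iff (hmn : m ≤ n) (hu : 0 < u) :
    trinomial m n γ u = 0 ↔ scaledTrinomial m n γ u = 0 := by
  rw [trinomial_eq_pow_mul_scaledTrinomial hmn hu.ne', mul_eq_zero,
    or_iff_right (pow_ne_zero m hu.ne')]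

theorem strictConvexOn_scaledTrinomial (hm : m ≠ 0) (hγ : 0 ≤ γ) :
    StrictConvexOn ℝ (Ioi 0) (scaledTrinomial m n γ) := by
  have hinv : StrictConvexOn ℝ (Ioi 0) fun u : ℝ => u ^ (-(m : ℤ)) :=
    strictConvexOn_zpow (by simpa using hm) (by omega)
  have hpow : ConvexOn ℝ (Ioi 0) fun u : ℝ => γ * u ^ (n - m) :=
    ((convexOn_pow (n - m)).subset Ioi_subset_Ici_self (convex_Ioi 0)).smul hγ
  have hsum : scaledTrinomial m n γ =
      (fun u : ℝ => u ^ (-(m : ℤ))) + (fun u => γ * u ^ (n - m)) + fun _ => -1 := by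
    funext u
    simp only [scaledTrinomial, Pi.add_apply]
    ring
  rw [hsum]
  exact (hinv.add_convexOn hpow).add_const (-1)

theorem exists_trinomial_neg (hm : 0 < m) (hmn : m < n) (hγ : γ < gammaCrit (m + 1) (n + 1)) :
    ∃ v, 0 < v ∧ trinomial m n γ v < 0 := by
  have hm' : (0 : ℝ) < m := by exact_mod_cast hm
  have hmn' : (m : ℝ) < n := by exact_mod_cast hmn
  have hn' : (0 : ℝ) < n := hm'.trans hmn'
  have hnm : (0 : ℝ) < n - m := sub_pos.2 hmn'
  set K : ℝ := n / (n - m) with hK_def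
  have hK : 0 < K := div_pos hn' hnm
  refine ⟨K ^ (1 / m : ℝ), by positivity, ?_⟩
  have hvm : (K ^ (1 / m : ℝ)) ^ m = K := by
    rw [← Real.rpow_natCast, ← Real.rpow_mul hK.le, one_div_mul_cancel hm'.ne', Real.rpow_one]
  have hvn : (K ^ (1 / m : ℝ)) ^ n = K ^ (n / m : ℝ) := by
    rw [← Real.rpow_natCast, ← Real.rpow_mul hK.le, one_div_mul_eq_div]
  -- `γ_crit · K^{n/m} = (m/n) · K^{n/m - (n-m)/m} = (m/n) · K`
  have hcrit : gammaCrit (m + 1) (n + 1) * K ^ (n / m : ℝ) = m / (n - m) := by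
    have hexp : -(((n : ℝ) - m) / m) + n / m = 1 := by field_simp; ring
    rw [gammaCrit_add_one, show ((n : ℝ) - m) / n = K⁻¹ by rw [hK_def, inv_div],
      Real.inv_rpow hK.le, ← Real.rpow_neg hK.le, mul_assoc, ← Real.rpow_add hK, hexp,
      Real.rpow_one, hK_def]
    field_simp [hn'.ne', hnm.ne']
  have hlt := mul_lt_mul_of_pos_right hγ (Real.rpow_pos_of_pos hK (n / m : ℝ))
  rw [hcrit] at hlt
  have hK1 : 1 - K = -(m / (n - m)) := by
    rw [hK_def]
    field_simp [hnm.ne']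
    ring
  rw [trinomial, hvm, hvn]
  linarith

theorem exists_gt_scaledTrinomial_pos (hγ : 0 < γ) (hmn : m < n) (v : ℝ) :
    ∃ X, v < X ∧ 0 < scaledTrinomial m n γ X := by
  set X := |v| + 1 + γ⁻¹
  have hγinv : 0 < γ⁻¹ := inv_pos.2 hγ
  have hX1 : 1 ≤ X := by linarith [abs_nonneg v]
  have hXγ : γ⁻¹ ≤ X := by linarith [abs_nonneg v]
  refine ⟨X, by linarith [le_abs_self v], ?_⟩
  have hlarge : 1 ≤ γ * X ^ (n - m) :=
    calc 1 = γ * γ⁻¹ := (mul_inv_cancel₀ hγ.ne').symm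
      _ ≤ γ * X := by gcongr
      _ ≤ γ * X ^ (n - m) := by gcongr; exact le_self_pow₀ hX1 (by omega)
  have hinv : 0 < X ^ (-(m : ℤ)) := zpow_pos (by linarith) _
  rw [scaledTrinomial]
  linarith

theorem trinomial_two_roots (hm : 0 < m) (hmn : m < n) (hγ0 : 0 < γ)
    (hγ : γ < gammaCrit (m + 1) (n + 1)) :
    ∃ a A : ℝ, 0 < a ∧ a < A ∧ trinomial m n γ a = 0 ∧ trinomial m n γ A = 0 ∧
      (∀ u : ℝ, 0 < u → trinomial m n γ u = 0 → u = a ∨ u = A) ∧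
      (∀ u : ℝ, ((0 < u ∧ u < a) ∨ A < u) → 0 < trinomial m n γ u) ∧
      (∀ u : ℝ, a < u → u < A → trinomial m n γ u < 0) := by
  obtain ⟨v, hv0, hgv⟩ := exists_trinomial_neg hm hmn hγ
  obtain ⟨X, hvX, hφX⟩ := exists_gt_scaledTrinomial_pos hγ0 hmn v
  have hgX := (trinomial_pos_iff hmn.le (hv0.trans hvX)).2 hφX
  obtain ⟨a, ⟨ha0, hav⟩, hga⟩ := intermediate_value_Ioo' hv0.le continuous_trinomial.continuousOn
    ⟨hgv, by rw [trinomial_zero hm.ne' (hm.trans hmn).ne']; exact one_pos⟩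
  obtain ⟨A, ⟨hvA, -⟩, hgA⟩ :=
    intermediate_value_Ioo hvX.le continuous_trinomial.continuousOn ⟨hgv, hgX⟩
  have hA0 : 0 < A := hv0.trans hvA
  have haA : a < A := hav.trans hvA
  have hφ := strictConvexOn_scaledTrinomial (n := n) hm.ne' hγ0.le
  have hφa := (trinomial_eq_zero_iff hmn.le ha0).1 hga
  have hφA := (trinomial_eq_zero_iff hmn.le hA0).1 hgA
  refine ⟨a, A, ha0, haA, hga, hgA, fun u hu hgu => ?_, ?_, fun u hau huA => ?_⟩
  · exact hφ.eq_or_eq_of_eq_zero ha0 hA0 hu hφa hφA haA ((trinomial_eq_zero_iff hmn.le hu).1 hgu)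
  · rintro u (⟨hu0, hua⟩ | hAu)
    · exact (trinomial_pos_iff hmn.le hu0).2 (hφ.pos_of_lt_of_eq_zero hu0 hA0 hφa hφA hua haA)
    · exact (trinomial_pos_iff hmn.le (hA0.trans hAu)).2
        (hφ.pos_of_gt_of_eq_zero ha0 (hA0.trans hAu) hφa hφA haA hAu)
  · exact (trinomial_neg_iff hmn.le (ha0.trans hau)).2
      (hφ.neg_of_mem_Ioo_of_eq_zero ha0 hA0 hφa hφA ⟨hau, huA⟩)

end Trinomial

/-- For `2 ≤ p < q` and `0 < γ < γ_{p,q}`, the function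
`g(u) = 1 − u^{p−1} + γ u^{q−1}` has exactly two roots `a < A` in `(0,∞)`, and
`g > 0` on `(0,a) ∪ (A,∞)` while `g < 0` on `(a,A)`. -/
theorem two_roots_of_gamma_lt_crit (p q : ℕ) (hp : 2 ≤ p) (hpq : p < q)
    (γ : ℝ) (hγ0 : 0 < γ) (hγ : γ < gammaCrit p q) :
    ∃ a A : ℝ, 0 < a ∧ a < A ∧
      (1 - a ^ (p - 1) + γ * a ^ (q - 1) = 0) ∧
      (1 - A ^ (p - 1) + γ * A ^ (q - 1) = 0) ∧
      (∀ u : ℝ, 0 < u → 1 - u ^ (p - 1) + γ * u ^ (q - 1) = 0 → u = a ∨ u = A) ∧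
      (∀ u : ℝ, ((0 < u ∧ u < a) ∨ A < u) → 0 < 1 - u ^ (p - 1) + γ * u ^ (q - 1)) ∧
      (∀ u : ℝ, a < u → u < A → 1 - u ^ (p - 1) + γ * u ^ (q - 1) < 0) := by
  obtain ⟨m, rfl⟩ : ∃ m, p = m + 1 := ⟨p - 1, by omega⟩
  obtain ⟨n, rfl⟩ : ∃ n, q = n + 1 := ⟨q - 1, by omega⟩
  simp only [Nat.add_sub_cancel]
  exact trinomial_two_roots (by omega) (by omega) hγ0 hγ
end

section
/- Let p, q be integers with 2 ≤ p < q and let γ be a real number with γ > γ_{p,q}. Then 1 − u^{p−1} + γ u^{q−1} > 0 for every u ≥ 0; in particular the function g(u) = 1 − u^{p−1} + γ u^{q−1} has no root in (0, ∞). -/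
/-!
Weighted AM-GM (Young's inequality) gives `u ^ a ≤ 1 + c(a, b) * u ^ b` for `0 < a < b` and
`u ≥ 0`, with the sharp constant `c(a, b) = (a / b) * ((b - a) / b) ^ ((b - a) / a)`. For
`a = p - 1`, `b = q - 1` this constant is `γ_{p,q}`, and `γ > γ_{p,q}` makes the inequality
strict for `u > 0`.
-/

namespace Real

/-- Weighted AM-GM with weights `1 - θ, θ` at the points `(1 - θ)⁻¹` and
`(1 - θ) ^ ((1 - θ) / θ) * v`, whose weighted geometric mean is `v ^ θ`. -/
theorem rpow_le_one_add_mul_of_lt_one {θ v : ℝ} (hθ₀ : 0 < θ) (hθ₁ : θ < 1) (hv : 0 ≤ v) :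
    v ^ θ ≤ 1 + θ * (1 - θ) ^ ((1 - θ) / θ) * v := by
  have hs : 0 < 1 - θ := sub_pos.mpr hθ₁
  set c := (1 - θ) ^ ((1 - θ) / θ)
  have hc : 0 < c := rpow_pos_of_pos hs _
  have hgeom : ((1 - θ)⁻¹) ^ (1 - θ) * (c * v) ^ θ = v ^ θ := by
    rw [mul_rpow hc.le hv, ← rpow_mul hs.le, div_mul_cancel₀ _ hθ₀.ne', inv_rpow hs.le,
      inv_mul_cancel_left₀ (rpow_pos_of_pos hs _).ne']
  calc v ^ θ = ((1 - θ)⁻¹) ^ (1 - θ) * (c * v) ^ θ := hgeom.symm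
    _ ≤ (1 - θ) * (1 - θ)⁻¹ + θ * (c * v) :=
      geom_mean_le_arith_mean2_weighted hs.le hθ₀.le (inv_nonneg.mpr hs.le)
        (mul_nonneg hc.le hv) (sub_add_cancel 1 θ)
    _ = 1 + θ * c * v := by rw [mul_inv_cancel₀ hs.ne', mul_assoc]

theorem rpow_le_one_add_mul_rpow {a b u : ℝ} (ha : 0 < a) (hab : a < b) (hu : 0 ≤ u) :
    u ^ a ≤ 1 + a / b * ((b - a) / b) ^ ((b - a) / a) * u ^ b := by
  have hb : 0 < b := ha.trans hab
  have hθ₁ : a / b < 1 := (div_lt_one hb).mpr hab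
  have h₁ : 1 - a / b = (b - a) / b := by field_simp
  have h₂ : (1 - a / b) / (a / b) = (b - a) / a := by field_simp
  have key := rpow_le_one_add_mul_of_lt_one (div_pos ha hb) hθ₁ (rpow_nonneg hu b)
  rwa [← rpow_mul hu, mul_div_cancel₀ _ hb.ne', h₂, h₁] at key

theorem one_sub_rpow_add_mul_rpow_pos {a b u γ : ℝ} (ha : 0 < a) (hab : a < b) (hu : 0 ≤ u)
    (hγ : a / b * ((b - a) / b) ^ ((b - a) / a) < γ) :
    0 < 1 - u ^ a + γ * u ^ b := by
  rcases hu.eq_or_lt with rfl | hu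
  · simp [zero_rpow ha.ne', zero_rpow (ha.trans hab).ne']
  · have := rpow_le_one_add_mul_rpow ha hab hu.le
    have := mul_lt_mul_of_pos_right hγ (rpow_pos_of_pos hu b)
    linarith

end Real

/-- For `2 ≤ p < q` and `γ > γ_{p,q}`, one has `1 − u^{p−1} + γ u^{q−1} > 0` for
every `u ≥ 0`; in particular `g(u) = 1 − u^{p−1} + γ u^{q−1}` has no root in `(0,∞)`. -/
theorem no_root_of_gamma_gt_crit (p q : ℕ) (hp : 2 ≤ p) (hpq : p < q)
    (γ : ℝ) (hγ : gammaCrit p q < γ) :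
    (∀ u : ℝ, 0 ≤ u → 0 < 1 - u ^ (p - 1) + γ * u ^ (q - 1)) ∧
    ¬ ∃ u : ℝ, 0 < u ∧ 1 - u ^ (p - 1) + γ * u ^ (q - 1) = 0 := by
  have hp' : (2 : ℝ) ≤ p := by exact_mod_cast hp
  have hpq' : (p : ℝ) < q := by exact_mod_cast hpq
  unfold gammaCrit at hγ
  rw [← sub_sub_sub_cancel_right (q : ℝ) p 1] at hγ
  have hpos : ∀ u : ℝ, 0 ≤ u → 0 < 1 - u ^ (p - 1) + γ * u ^ (q - 1) := fun u hu => by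
    have := Real.one_sub_rpow_add_mul_rpow_pos (by linarith) (by linarith) hu hγ
    rwa [← Nat.cast_pred (by omega), ← Nat.cast_pred (by omega), Real.rpow_natCast,
      Real.rpow_natCast] at this
  exact ⟨hpos, fun ⟨u, hu, hroot⟩ => (hpos u hu.le).ne' hroot⟩
end

section
/- Let p, q be integers with 2 ≤ p < q and let γ be a real number with 0 < γ < γ_{p,q}. Let 0 < a < A be the two roots of g(u) = 1 − u^{p−1} + γ u^{q−1} in (0, ∞). Then f'(a) = 1 − p a^{p−1} + γ q a^{q−1} < 0 and f'(A) = 1 − p A^{p−1} + γ q A^{q−1} > 0. -/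
open Set

theorem natCast_mul_pow_sub_one_mul (n : ℕ) (u : ℝ) : (n : ℝ) * u ^ (n - 1) * u = n * u ^ n := by
  rcases n.eq_zero_or_pos with rfl | hn
  · simp
  · rw [mul_assoc, pow_sub_one_mul hn.ne']

theorem exists_mul_pow_eq_of_pow_sub_mul_pow_eq {n m : ℕ} {γ a A : ℝ} (haA : a < A)
    (h : a ^ n - γ * a ^ m = A ^ n - γ * A ^ m) :
    ∃ c ∈ Ioo a A, γ * m * c ^ m = n * c ^ n := by
  obtain ⟨c, hc, hderiv⟩ := exists_hasDerivAt_eq_zero haA (by fun_prop) h fun u _ =>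
    (hasDerivAt_pow n u).sub ((hasDerivAt_pow m u).const_mul γ)
  refine ⟨c, hc, ?_⟩
  linear_combination -c * hderiv + natCast_mul_pow_sub_one_mul n c -
    γ * natCast_mul_pow_sub_one_mul m c

theorem mul_pow_sub_natCast_mul_pow_eq {C u : ℝ} {n m : ℕ} (hnm : n ≤ m) :
    C * u ^ m - n * u ^ n = u ^ n * (C * u ^ (m - n) - n) := by
  rw [← Nat.add_sub_cancel' hnm, pow_add, Nat.add_sub_cancel_left]
  ring

theorem mul_pow_sub_eq_of_mul_pow_eq {C c : ℝ} {n m : ℕ} (hnm : n ≤ m) (hc0 : 0 < c)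
    (hc : C * c ^ m = n * c ^ n) : C * c ^ (m - n) = n := by
  have h := mul_pow_sub_natCast_mul_pow_eq (C := C) (u := c) hnm
  rw [hc, sub_self, eq_comm, mul_eq_zero] at h
  exact sub_eq_zero.mp (h.resolve_left (pow_pos hc0 n).ne')

theorem mul_pow_sub_natCast_mul_pow_neg_pos {C a c A : ℝ} {n m : ℕ} (hn : 0 < n) (hnm : n < m)
    (ha : 0 < a) (hac : a < c) (hcA : c < A) (hc : C * c ^ m = n * c ^ n) :
    C * a ^ m - n * a ^ n < 0 ∧ 0 < C * A ^ m - n * A ^ n := by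
  have hc0 := ha.trans hac
  have hcrit := mul_pow_sub_eq_of_mul_pow_eq hnm.le hc0 hc
  have hC : 0 < C := pos_of_mul_pos_left (hcrit ▸ Nat.cast_pos.mpr hn) (by positivity)
  have hmono : StrictMonoOn (fun u : ℝ => C * u ^ (m - n)) (Ici 0) := fun x hx y _ hxy =>
    mul_lt_mul_of_pos_left (pow_lt_pow_left₀ hxy hx (by omega)) hC
  rw [mul_pow_sub_natCast_mul_pow_eq hnm.le, mul_pow_sub_natCast_mul_pow_eq hnm.le]
  constructor
  · refine mul_neg_of_pos_of_neg (pow_pos ha n) (sub_neg.mpr ?_)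
    exact hcrit ▸ hmono ha.le hc0.le hac
  · refine mul_pos (pow_pos (hc0.trans hcA) n) (sub_pos.mpr ?_)
    exact hcrit ▸ hmono hc0.le (hc0.trans hcA).le hcA

theorem fprime_sign_at_roots_general (p q : ℕ) (hp : 2 ≤ p) (hpq : p < q)
    (γ : ℝ)
    (a A : ℝ) (ha : 0 < a) (haA : a < A)
    (hroota : 1 - a ^ (p - 1) + γ * a ^ (q - 1) = 0)
    (hrootA : 1 - A ^ (p - 1) + γ * A ^ (q - 1) = 0) :
    (1 - (p : ℝ) * a ^ (p - 1) + γ * (q : ℝ) * a ^ (q - 1) < 0) ∧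
    (0 < 1 - (p : ℝ) * A ^ (p - 1) + γ * (q : ℝ) * A ^ (q - 1)) := by
  obtain ⟨c, ⟨hac, hcA⟩, hc⟩ :=
    exists_mul_pow_eq_of_pow_sub_mul_pow_eq (n := p - 1) (m := q - 1) (γ := γ) haA (by linarith)
  have hn : 0 < p - 1 := by omega
  have hnm : p - 1 < q - 1 := by omega
  have hsign := mul_pow_sub_natCast_mul_pow_neg_pos hn hnm ha hac hcA hc
  push_cast [Nat.cast_sub (by omega : 1 ≤ p), Nat.cast_sub (by omega : 1 ≤ q)] at hsign
  constructor <;> linarith [hsign.1, hsign.2]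

/-- For `2 ≤ p < q`, `0 < γ < γ_{p,q}` and the two roots `0 < a < A` of
`g(u) = 1 − u^{p−1} + γ u^{q−1}` in `(0,∞)`, one has
`f'(a) = 1 − p a^{p−1} + γ q a^{q−1} < 0` and `f'(A) = 1 − p A^{p−1} + γ q A^{q−1} > 0`. -/
theorem fprime_sign_at_roots (p q : ℕ) (hp : 2 ≤ p) (hpq : p < q)
    (γ : ℝ) (hγ0 : 0 < γ) (hγ : γ < gammaCrit p q)
    (a A : ℝ) (ha : 0 < a) (haA : a < A)
    (hroota : 1 - a ^ (p - 1) + γ * a ^ (q - 1) = 0)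
    (hrootA : 1 - A ^ (p - 1) + γ * A ^ (q - 1) = 0) :
    (1 - (p : ℝ) * a ^ (p - 1) + γ * (q : ℝ) * a ^ (q - 1) < 0) ∧
    (0 < 1 - (p : ℝ) * A ^ (p - 1) + γ * (q : ℝ) * A ^ (q - 1)) :=
  fprime_sign_at_roots_general p q hp hpq γ a A ha haA hroota hrootA
end

section
/- Let p, q be integers with 2 ≤ p < q and let γ > 0 be real. The system of equations 1 − u^{p−1} + γ u^{q−1} = 0 and 1 − p u^{p−1} + γ q u^{q−1} = 0 has a solution u ∈ (0, ∞) if and only if γ = γ_{p,q}. -/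
/-- For `2 ≤ p < q` and real `γ > 0`, the system
`1 − u^{p−1} + γ u^{q−1} = 0` and `1 − p u^{p−1} + γ q u^{q−1} = 0` has a solution
`u ∈ (0,∞)` if and only if `γ = γ_{p,q}`. -/
theorem double_root_iff_gamma_crit (p q : ℕ) (hp : 2 ≤ p) (hpq : p < q)
    (γ : ℝ) (hγ0 : 0 < γ) :
    (∃ u : ℝ, 0 < u ∧
      1 - u ^ (p - 1) + γ * u ^ (q - 1) = 0 ∧
      1 - (p : ℝ) * u ^ (p - 1) + γ * (q : ℝ) * u ^ (q - 1) = 0) ↔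
      γ = gammaCrit p q := by
  set a : ℝ := (p : ℝ) - 1 with ha_def
  set b : ℝ := (q : ℝ) - 1 with hb_def
  set c : ℝ := (q : ℝ) - (p : ℝ) with hc_def
  have hpge : (2:ℝ) ≤ p := by exact_mod_cast hp
  have ha : 0 < a := by simp only [ha_def]; linarith
  have hqc : (p:ℝ) < q := by exact_mod_cast hpq
  have hc : 0 < c := by simp only [hc_def]; linarith
  have hb : 0 < b := by simp only [hb_def]; linarith
  have hbac : b = a + c := by simp only [ha_def, hb_def, hc_def]; ring
  have hcastp : ((p - 1 : ℕ) : ℝ) = a := by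
    rw [Nat.cast_sub (by omega : 1 ≤ p)]; simp [ha_def]
  have hcastq : ((q - 1 : ℕ) : ℝ) = b := by
    rw [Nat.cast_sub (by omega : 1 ≤ q)]; simp [hb_def]
  set base : ℝ := b / c with hbase_def
  have hbase : 0 < base := div_pos hb hc
  set u0 : ℝ := base ^ ((1:ℝ) / a) with hu0_def
  have hu0 : 0 < u0 := Real.rpow_pos_of_pos hbase _
  have htb : (0:ℝ) < c / b := div_pos hc hb
  -- nat powers of u0
  have hA : u0 ^ (p - 1) = base := by
    rw [← Real.rpow_natCast u0 (p-1), hcastp, hu0_def, ← Real.rpow_mul hbase.le,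
      one_div_mul_cancel ha.ne', Real.rpow_one]
  have hB : u0 ^ (q - 1) = base ^ (b / a) := by
    rw [← Real.rpow_natCast u0 (q-1), hcastq, hu0_def, ← Real.rpow_mul hbase.le]
    ring_nf
  -- key computation
  have hKey : gammaCrit p q * u0 ^ (q - 1) = a / c := by
    rw [hB]
    have hgc : gammaCrit p q = (a / b) * (c / b) ^ (c / a) := rfl
    have hbinv : base = (c / b)⁻¹ := by rw [hbase_def]; rw [inv_div]
    have h1 : base ^ (b / a) = (c / b) ^ (-(b / a)) := by
      rw [hbinv, Real.inv_rpow htb.le, ← Real.rpow_neg htb.le]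
    rw [hgc, h1, mul_assoc, ← Real.rpow_add htb]
    have hexp : c / a + -(b / a) = -1 := by
      field_simp
      linarith [hbac]
    rw [hexp, Real.rpow_neg_one]
    field_simp
  have hBpos : 0 < u0 ^ (q - 1) := pow_pos hu0 _
  constructor
  · rintro ⟨u, hu, h1, h2⟩
    have hγB' : γ * u ^ (q - 1) * c = a := by
      linear_combination h2 - (p:ℝ) * h1
    have hγB : γ * u ^ (q - 1) = a / c := by
      rw [eq_div_iff hc.ne']; exact hγB'
    have hA' : u ^ (p - 1) = base := by
      rw [hbase_def, eq_div_iff hc.ne']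
      linear_combination hγB' - c * h1 - hbac
    have huu0 : u = u0 :=
      (pow_left_inj₀ hu.le hu0.le (by omega : p - 1 ≠ 0)).mp (hA'.trans hA.symm)
    have : γ * u0 ^ (q - 1) = gammaCrit p q * u0 ^ (q - 1) := by
      rw [hKey, ← huu0, hγB]
    exact mul_right_cancel₀ hBpos.ne' this
  · rintro rfl
    have hfin : c - (p:ℝ) * b + (q:ℝ) * a = 0 := by
      rw [ha_def, hb_def, hc_def]; ring
    refine ⟨u0, hu0, ?_, ?_⟩
    · rw [hA, hKey, hbase_def]
      field_simp
      linear_combination hbac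
    · have e2 : gammaCrit p q * (q:ℝ) * u0 ^ (q - 1) = (q:ℝ) * (a / c) := by
        rw [mul_right_comm, hKey]; ring
      rw [hA, e2, hbase_def]
      field_simp
      linear_combination hfin
end

section
/- Let p, q be integers with 2 ≤ p < q, let γ > γ_{p,q}, and let ε > 0. If u = (u_n)_{n∈ℤ} is a complex-valued sequence in ℓ²(ℤ) satisfying ε(u_{n+1} − 2u_n + u_{n−1}) − u_n + |u_n|^{p−1}u_n − γ|u_n|^{q−1}u_n = 0 for all n ∈ ℤ, then u_n = 0 for all n ∈ ℤ. -/
open Filter Topology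

/-- Weighted AM-GM for `x^{(b-a)/a} t^b` and `x⁻¹` with weights `a/b` and `x = (b-a)/b`. -/
theorem Real.rpow_le_one_add_mul_rpow_s5 {a b t : ℝ} (ha : 0 < a) (hab : a < b) (ht : 0 ≤ t) :
    t ^ a ≤ 1 + a / b * ((b - a) / b) ^ ((b - a) / a) * t ^ b := by
  have hb : 0 < b := ha.trans hab
  set x : ℝ := (b - a) / b with hx_def
  have hx : 0 < x := div_pos (sub_pos.2 hab) hb
  have hxc : 0 ≤ x ^ ((b - a) / a) := Real.rpow_nonneg hx.le _
  have hw : a / b + x = 1 := by rw [hx_def]; field_simp; ring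
  have H := Real.geom_mean_le_arith_mean2_weighted (div_nonneg ha.le hb.le) hx.le
    (mul_nonneg hxc (Real.rpow_nonneg ht b)) (inv_nonneg.2 hx.le) hw
  have hL : (x ^ ((b - a) / a) * t ^ b) ^ (a / b) * x⁻¹ ^ x = t ^ a := by
    rw [Real.mul_rpow hxc (Real.rpow_nonneg ht b), ← Real.rpow_mul hx.le, ← Real.rpow_mul ht,
      ← Real.rpow_neg_one x, ← Real.rpow_mul hx.le, mul_right_comm, ← Real.rpow_add hx]
    have hx_exp : (b - a) / a * (a / b) + -1 * x = 0 := by rw [hx_def]; field_simp; ring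
    have ht_exp : b * (a / b) = a := by field_simp
    rw [hx_exp, ht_exp, Real.rpow_zero, one_mul]
  have hR : a / b * (x ^ ((b - a) / a) * t ^ b) + x * x⁻¹ =
      1 + a / b * x ^ ((b - a) / a) * t ^ b := by
    rw [mul_inv_cancel₀ hx.ne']; ring
  rwa [hL, hR] at H

theorem pow_le_one_add_gammaCrit_mul_pow {p q : ℕ} (hp : 2 ≤ p) (hpq : p < q) {t : ℝ}
    (ht : 0 ≤ t) : t ^ (p - 1) ≤ 1 + gammaCrit p q * t ^ (q - 1) := by
  have hp' : ((p - 1 : ℕ) : ℝ) = p - 1 := by rw [Nat.cast_sub (by omega), Nat.cast_one]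
  have hq' : ((q - 1 : ℕ) : ℝ) = q - 1 := by rw [Nat.cast_sub (by omega), Nat.cast_one]
  have key := Real.rpow_le_one_add_mul_rpow_s5 (a := ((p - 1 : ℕ) : ℝ)) (b := ((q - 1 : ℕ) : ℝ))
    (by rw [hp']; linarith [show (2 : ℝ) ≤ p by exact_mod_cast hp])
    (by rw [hp', hq']; linarith [show (p : ℝ) < q by exact_mod_cast hpq]) ht
  rwa [Real.rpow_natCast, Real.rpow_natCast, hp', hq', sub_sub_sub_cancel_right] at key

theorem pow_lt_one_add_mul_pow_of_gammaCrit_lt {p q : ℕ} (hp : 2 ≤ p) (hpq : p < q) {γ : ℝ}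
    (hγ : gammaCrit p q < γ) {t : ℝ} (ht : 0 ≤ t) : t ^ (p - 1) < 1 + γ * t ^ (q - 1) := by
  rcases ht.eq_or_lt with rfl | ht
  · simp [zero_pow (show p - 1 ≠ 0 by omega), zero_pow (show q - 1 ≠ 0 by omega)]
  · calc t ^ (p - 1) ≤ 1 + gammaCrit p q * t ^ (q - 1) :=
          pow_le_one_add_gammaCrit_mul_pow hp hpq ht.le
      _ < 1 + γ * t ^ (q - 1) := by gcongr

theorem exists_forall_le_of_tendsto_cofinite_zero {ι : Type*} [Nonempty ι] {f : ι → ℝ}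
    (hf₀ : 0 ≤ f) (hf : Tendsto f cofinite (𝓝 0)) : ∃ m, ∀ n, f n ≤ f m := by
  by_cases hpos : ∃ n₀, 0 < f n₀
  · obtain ⟨n₀, hn₀⟩ := hpos
    have hfin : {n | f n₀ ≤ f n}.Finite := by
      simpa only [not_lt] using eventually_cofinite.1 (hf.eventually_lt_const hn₀)
    obtain ⟨m, hm, hmax⟩ := Set.exists_max_image _ f hfin ⟨n₀, le_refl (f n₀)⟩
    refine ⟨m, fun n => ?_⟩
    by_cases hn : f n₀ ≤ f n
    · exact hmax n hn
    · exact (not_le.1 hn).le.trans hm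
  · push Not at hpos
    exact ⟨Classical.arbitrary ι, fun n => (hpos n).trans (hf₀ _)⟩

theorem eq_zero_of_smul_add_eq_smul {E : Type*} [NormedAddCommGroup E] [NormedSpace ℝ E]
    {x y z : E} (hx : ‖x‖ ≤ ‖z‖) (hy : ‖y‖ ≤ ‖z‖) {ε c : ℝ} (hε : 0 ≤ ε) (hc : 2 * ε < c)
    (h : ε • (x + y) = c • z) : z = 0 := by
  have hnorm : c * ‖z‖ ≤ 2 * ε * ‖z‖ :=
    calc c * ‖z‖ = ε * ‖x + y‖ := by
          rw [← Real.norm_of_nonneg (by linarith : 0 ≤ c), ← norm_smul, ← h, norm_smul,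
            Real.norm_of_nonneg hε]
      _ ≤ ε * (‖x‖ + ‖y‖) := by gcongr; exact norm_add_le x y
      _ ≤ 2 * ε * ‖z‖ := by nlinarith
  exact norm_le_zero_iff.1 (by nlinarith [norm_nonneg z])

/-- For `2 ≤ p < q`, `γ > γ_{p,q}` and `ε > 0`, the only ℓ²(ℤ) solution of the
stationary DNLS equation
`ε(u_{n+1} − 2u_n + u_{n−1}) − u_n + |u_n|^{p−1}u_n − γ|u_n|^{q−1}u_n = 0`
is the zero sequence. -/
theorem only_zero_solution_of_gamma_gt_crit (p q : ℕ) (hp : 2 ≤ p) (hpq : p < q)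
    (γ : ℝ) (hγ : gammaCrit p q < γ) (ε : ℝ) (hε : 0 < ε)
    (u : ℤ → ℂ) (hl2 : Summable fun n : ℤ => ‖u n‖ ^ 2)
    (heq : ∀ n : ℤ,
      (ε : ℂ) * (u (n + 1) - 2 * u n + u (n - 1)) - u n
        + (‖u n‖ : ℂ) ^ (p - 1) * u n - (γ : ℂ) * (‖u n‖ : ℂ) ^ (q - 1) * u n = 0) :
    ∀ n : ℤ, u n = 0 := by
  obtain ⟨m, hm⟩ := exists_forall_le_of_tendsto_cofinite_zero (fun n => sq_nonneg ‖u n‖)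
    hl2.tendsto_cofinite_zero
  have hmax : ∀ n, ‖u n‖ ≤ ‖u m‖ := fun n =>
    (pow_le_pow_iff_left₀ (norm_nonneg _) (norm_nonneg _) two_ne_zero).1 (hm n)
  set c := 2 * ε + 1 - ‖u m‖ ^ (p - 1) + γ * ‖u m‖ ^ (q - 1) with hc_def
  have hc : 2 * ε < c := by
    linarith [pow_lt_one_add_mul_pow_of_gammaCrit_lt hp hpq hγ (norm_nonneg (u m))]
  have hrel : ε • (u (m + 1) + u (m - 1)) = c • u m := by
    simp only [Complex.real_smul, hc_def]
    push_cast
    linear_combination heq m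
  have hum : u m = 0 := eq_zero_of_smul_add_eq_smul (hmax _) (hmax _) hε.le hc hrel
  intro n
  simpa [hum] using hmax n
end

section
/- Let p, q be integers with 2 ≤ p < q, let γ > 0, and let ε > 0. Suppose a complex-valued sequence u = (u_n)_{n∈ℤ} satisfies ε(u_{n+1} − 2u_n + u_{n−1}) − u_n + |u_n|^{p−1}u_n − γ|u_n|^{q−1}u_n = 0 for all n ∈ ℤ and u_n → 0 as n → +∞ and as n → −∞. Then there exists θ ∈ ℝ such that e^{−iθ} u_n is real for every n ∈ ℤ. -/
/-!
Written as `u_{n+1} + u_{n-1} = c_n u_n` with real `c_n`, the equation conserves the current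
`Im(conj(u_n) u_{n+1})`, which must then vanish because `u` decays. After rotating by the phase of
some `u_m ≠ 0`, both `u_m` and (by the vanishing current) `u_{m+1}` are real; the imaginary parts
solve the same real second-order recurrence, so they vanish everywhere.
-/

open Complex ComplexConjugate Filter Topology

/-- The imaginary part of `conj(u_n) u_{n+1}`; the paper's `J_n` is `2i` times it. -/
noncomputable def discreteCurrent (u : ℤ → ℂ) (n : ℤ) : ℝ :=
  (conj (u n) * u (n + 1)).im

theorem eq_zero_of_consecutive_eq_zero {R : Type*} [Ring R] {c f : ℤ → R}
    (hf : ∀ n, f (n + 1) + f (n - 1) = c n * f n) {m : ℤ} (h₀ : f m = 0) (h₁ : f (m + 1) = 0)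
    (n : ℤ) : f n = 0 := by
  suffices ∀ k, f k = 0 ∧ f (k + 1) = 0 from (this n).1
  intro k
  induction k using Int.inductionOn' (b := m) with
  | zero => exact ⟨h₀, h₁⟩
  | succ k _ ih =>
    refine ⟨ih.2, ?_⟩
    have := hf (k + 1)
    rwa [add_sub_cancel_right, ih.1, ih.2, mul_zero, add_zero] at this
  | pred k _ ih =>
    refine ⟨?_, by rw [sub_add_cancel]; exact ih.1⟩
    have := hf k
    rwa [ih.1, ih.2, mul_zero, zero_add] at this

theorem im_exp_neg_arg_mul_eq_zero {a b : ℂ} (ha : a ≠ 0) (h : (conj a * b).im = 0) :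
    (exp (-(arg a : ℂ) * I) * b).im = 0 := by
  have hconj : conj a = ‖a‖ * exp (-(arg a : ℂ) * I) := by
    conv_lhs => rw [← norm_mul_exp_arg_mul_I a]
    rw [map_mul, ← exp_conj, conj_ofReal, map_mul, conj_ofReal, conj_I, mul_neg, neg_mul]
  rw [hconj, mul_assoc, im_ofReal_mul] at h
  exact (mul_eq_zero.mp h).resolve_left (norm_ne_zero_iff.mpr ha)

section Recurrence

variable {c : ℤ → ℝ} {u : ℤ → ℂ} (hu : ∀ n, u (n + 1) + u (n - 1) = c n * u n)
include hu

/-- `conj(u_{n+1}) u_{n+2} = c_{n+1} |u_{n+1}|² - conj(u_{n+1}) u_n`, whose first term is real. -/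
theorem discreteCurrent_succ (n : ℤ) : discreteCurrent u (n + 1) = discreteCurrent u n := by
  have h := hu (n + 1)
  rw [add_sub_cancel_right, ← eq_sub_iff_add_eq] at h
  simp only [discreteCurrent, h, mul_sub, sub_im, ← mul_assoc, mul_comm (conj _) (c _ : ℂ),
    mul_assoc _ (conj _), conj_mul', ← ofReal_pow, ← ofReal_mul, ofReal_im, zero_sub]
  rw [← conj_im, map_mul, conj_conj, mul_comm]

theorem discreteCurrent_eq_zero (hlim : Tendsto u atTop (𝓝 0)) (n : ℤ) :
    discreteCurrent u n = 0 := by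
  have hconst : ∀ n, discreteCurrent u n = discreteCurrent u 0 := fun n => by
    simpa using (show Function.Periodic (discreteCurrent u) 1 from
      discreteCurrent_succ hu).int_mul_eq n
  have hshift : Tendsto (fun n => u (n + 1)) atTop (𝓝 0) :=
    hlim.comp (tendsto_atTop_add_const_right _ 1 tendsto_id)
  have hJ : Tendsto (discreteCurrent u) atTop (𝓝 0) := by
    have := (continuous_im.tendsto _).comp (hlim.star.mul hshift)
    rwa [star_zero, mul_zero, zero_im] at this
  rw [hconst]
  exact tendsto_nhds_unique (tendsto_const_nhds.congr fun n => (hconst n).symm) hJ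

theorem exists_common_phase (hJ : ∀ n, discreteCurrent u n = 0) :
    ∃ θ : ℝ, ∀ n, (exp (-(θ : ℂ) * I) * u n).im = 0 := by
  by_cases hzero : ∀ n, u n = 0
  · exact ⟨0, fun n => by simp [hzero n]⟩
  obtain ⟨m, hm⟩ := not_forall.mp hzero
  refine ⟨arg (u m), eq_zero_of_consecutive_eq_zero (c := c) (fun n => ?_)
    (im_exp_neg_arg_mul_eq_zero hm (by simp [conj_mul', ← ofReal_pow]))
    (im_exp_neg_arg_mul_eq_zero hm (hJ m))⟩
  rw [← add_im, ← mul_add, hu, mul_left_comm, im_ofReal_mul]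

end Recurrence

theorem dnls_recurrence {p q : ℕ} {γ ε : ℝ} (hε : ε ≠ 0) {u : ℤ → ℂ}
    (heq : ∀ n : ℤ,
      (ε : ℂ) * (u (n + 1) - 2 * u n + u (n - 1)) - u n
        + (‖u n‖ : ℂ) ^ (p - 1) * u n - (γ : ℂ) * (‖u n‖ : ℂ) ^ (q - 1) * u n = 0)
    (n : ℤ) :
    u (n + 1) + u (n - 1) =
      ((2 * ε + 1 - ‖u n‖ ^ (p - 1) + γ * ‖u n‖ ^ (q - 1)) / ε : ℝ) * u n := by
  have hε' : (ε : ℂ) ≠ 0 := ofReal_ne_zero.mpr hε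
  push_cast
  field_simp
  linear_combination heq n

theorem common_phase_of_decaying_solution_general (p q : ℕ)
    (γ : ℝ) (ε : ℝ) (hε : 0 < ε)
    (u : ℤ → ℂ)
    (heq : ∀ n : ℤ,
      (ε : ℂ) * (u (n + 1) - 2 * u n + u (n - 1)) - u n
        + (‖u n‖ : ℂ) ^ (p - 1) * u n - (γ : ℂ) * (‖u n‖ : ℂ) ^ (q - 1) * u n = 0)
    (htop : Filter.Tendsto u Filter.atTop (nhds 0)) :
    ∃ θ : ℝ, ∀ n : ℤ, (Complex.exp (-(θ : ℂ) * Complex.I) * u n).im = 0 :=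
  have hu := dnls_recurrence hε.ne' heq
  exists_common_phase hu (discreteCurrent_eq_zero hu htop)

/-- For `2 ≤ p < q`, `γ > 0`, `ε > 0`, any solution of the stationary DNLS equation
`ε(u_{n+1} − 2u_n + u_{n−1}) − u_n + |u_n|^{p−1}u_n − γ|u_n|^{q−1}u_n = 0`
that tends to `0` as `n → ±∞` has all components sharing a common phase:
there is `θ ∈ ℝ` with `e^{−iθ} u_n` real for every `n`. -/
theorem common_phase_of_decaying_solution (p q : ℕ) (hp : 2 ≤ p) (hpq : p < q)
    (γ : ℝ) (hγ : 0 < γ) (ε : ℝ) (hε : 0 < ε)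
    (u : ℤ → ℂ)
    (heq : ∀ n : ℤ,
      (ε : ℂ) * (u (n + 1) - 2 * u n + u (n - 1)) - u n
        + (‖u n‖ : ℂ) ^ (p - 1) * u n - (γ : ℂ) * (‖u n‖ : ℂ) ^ (q - 1) * u n = 0)
    (htop : Filter.Tendsto u Filter.atTop (nhds 0))
    (hbot : Filter.Tendsto u Filter.atBot (nhds 0)) :
    ∃ θ : ℝ, ∀ n : ℤ, (Complex.exp (-(θ : ℂ) * Complex.I) * u n).im = 0 :=
  common_phase_of_decaying_solution_general p q γ ε hε u heq htop
end

section
/- Let p, q be integers with 2 ≤ p < q and let γ ∈ (0, γ_{p,q}), with a, A the two roots of g(u) = 1 − u^{p−1} + γ u^{q−1} in (0,∞), a < A. Let N ≥ 1 and let ũ ∈ ℝ^N have every entry in {a, −a, A, −A}, and let u⁽⁰⁾ ∈ ℓ²(ℤ, ℝ) be the sequence with u⁽⁰⁾_n = ũ_n for 1 ≤ n ≤ N and u⁽⁰⁾_n = 0 otherwise. Then there exist ε₀ > 0 and C₀ > 0 such that for every ε ∈ (0, ε₀) there exists a real-valued sequence u ∈ ℓ²(ℤ) satisfying ε(u_{n+1}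 − 2u_n + u_{n−1}) − u_n + |u_n|^{p−1}u_n − γ|u_n|^{q−1}u_n = 0 for all n ∈ ℤ and ‖u − u⁽⁰⁾‖_{ℓ²(ℤ)} ≤ C₀ ε. -/
/-- Extension of a vector `Fin N → ℝ` to `ℕ` by zero. -/
def extFin (N : ℕ) (ut : Fin N → ℝ) : ℕ → ℝ :=
  fun i => if h : i < N then ut ⟨i, h⟩ else 0

/-- The limiting sequence `u⁽⁰⁾ : ℤ → ℝ`, equal to `ũ_n` for `1 ≤ n ≤ N` and `0` otherwise
(1-indexed convention). -/
def limitSeq (N : ℕ) (ut : Fin N → ℝ) : ℤ → ℝ :=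
  fun n => if 1 ≤ n ∧ n ≤ (N : ℤ) then extFin N ut (n - 1).toNat else 0

/-!
Write `u = u₀ + v` with `u₀` the anticontinuum limit. Every entry of `u₀` lies in
`{0, ±a, ±A}`, where `φ(x) = -x + |x|^(p-1) x - γ |x|^(q-1) x` vanishes and `φ'` does not:
`φ'(0) = -1`, and Rolle's theorem for `u^(p-1) - γ u^(q-1)` on `[a, A]` gives a critical point
between the roots, whence `φ'(a) > 0 > φ'(A)`. So the chord iteration
`v ↦ v - (ε Δ(u₀ + v) + φ(u₀ + v)) / φ'(u₀)` is a contraction of the ball of radius `C ε` in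
`ℓ²(ℤ)` for small `ε`: the discrete Laplacian contributes `O(ε)` to its Lipschitz constant, the
Taylor remainder of `φ` contributes `O(C ε)`, and it moves `0` by `O(ε)`. Its fixed point solves
the equation.
-/

open Set Metric Filter Topology Asymptotics
open scoped NNReal ENNReal lp

theorem exists_fixedPoint_mem_closedBall {E : Type*} [NormedAddCommGroup E] [CompleteSpace E]
    {T : E → E} {K : ℝ≥0} (hK : K < 1) {r : ℝ} (hT0 : ‖T 0‖ ≤ (1 - K) * r)
    (hT : LipschitzOnWith K T (closedBall 0 r)) : ∃ x ∈ closedBall (0 : E) r, T x = x := by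
  have hK' : (K : ℝ) < 1 := hK
  have hr : 0 ≤ r := nonneg_of_mul_nonneg_right ((norm_nonneg _).trans hT0) (by linarith)
  have hmaps : MapsTo T (closedBall 0 r) (closedBall 0 r) := fun x hx => by
    rw [mem_closedBall_zero_iff] at hx ⊢
    calc ‖T x‖ ≤ ‖T x - T 0‖ + ‖T 0‖ := norm_le_norm_sub_add _ _
      _ ≤ K * ‖x - 0‖ + (1 - K) * r := by
          gcongr
          simpa only [dist_eq_norm] using hT.dist_le_mul x (mem_closedBall_zero_iff.2 hx) 0
            (mem_closedBall_self hr)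
      _ ≤ r := by rw [sub_zero]; nlinarith [K.2]
  obtain ⟨x, hx, hfix, -⟩ := ContractingWith.exists_fixedPoint' isClosed_closedBall.isComplete
    hmaps ⟨hK, hT.mapsToRestrict hmaps⟩ (mem_closedBall_self hr) (edist_ne_top _ _)
  exact ⟨x, hx, hfix⟩

lemma memℓp_two_iff_summable_sq {ι : Type*} {f : ι → ℝ} :
    Memℓp f 2 ↔ Summable fun i => f i ^ 2 := by
  simp [memℓp_gen_iff (by norm_num : 0 < (2 : ℝ≥0∞).toReal)]

namespace lp

lemma norm_two_eq_sqrt_tsum {ι : Type*} (f : ℓ²(ι, ℝ)) : ‖f‖ = √(∑' i, f i ^ 2) := by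
  rw [norm_eq_tsum_rpow (by norm_num : 0 < (2 : ℝ≥0∞).toReal), Real.sqrt_eq_rpow]
  simp

lemma abs_apply_le_norm {ι : Type*} (f : ℓ²(ι, ℝ)) (i : ι) : |f i| ≤ ‖f‖ :=
  norm_apply_le_norm two_ne_zero f i

noncomputable def absShift (f : ℓ²(ℤ, ℝ)) (k : ℤ) : ℓ²(ℤ, ℝ) :=
  ⟨fun n => |f (n + k)|, memℓp_two_iff_summable_sq.2 <| by
    simp only [sq_abs]
    exact (Equiv.addRight k).summable_iff.2 (memℓp_two_iff_summable_sq.1 f.2)⟩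

@[simp] lemma absShift_apply (f : ℓ²(ℤ, ℝ)) (k n : ℤ) : absShift f k n = |f (n + k)| := rfl

@[simp] lemma norm_absShift (f : ℓ²(ℤ, ℝ)) (k : ℤ) : ‖absShift f k‖ = ‖f‖ := by
  simp only [norm_two_eq_sqrt_tsum, absShift_apply, sq_abs]
  exact congrArg _ ((Equiv.addRight k).tsum_eq fun n => f n ^ 2)

noncomputable def stencil (α β : ℝ) (f : ℓ²(ℤ, ℝ)) : ℓ²(ℤ, ℝ) :=
  α • absShift f 1 + β • absShift f 0 + α • absShift f (-1)

lemma stencil_apply (α β : ℝ) (f : ℓ²(ℤ, ℝ)) (n : ℤ) :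
    stencil α β f n = α * |f (n + 1)| + β * |f n| + α * |f (n - 1)| := by
  simp only [stencil, coeFn_add, coeFn_smul, Pi.add_apply, Pi.smul_apply, smul_eq_mul,
    absShift_apply, add_zero, sub_eq_add_neg]

lemma norm_stencil_le {α β : ℝ} (hα : 0 ≤ α) (hβ : 0 ≤ β) (f : ℓ²(ℤ, ℝ)) :
    ‖stencil α β f‖ ≤ (2 * α + β) * ‖f‖ :=
  (norm_add₃_le ..).trans_eq <| by
    simp only [norm_smul, norm_absShift, Real.norm_of_nonneg hα, Real.norm_of_nonneg hβ]
    ring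

end lp

theorem exists_lp_fixedPoint_of_abs_sub_le {T : (ℤ → ℝ) → ℤ → ℝ} {α β K r : ℝ}
    (hα : 0 ≤ α) (hβ : 0 ≤ β) (hK : K < 1) (hαβ : 2 * α + β ≤ K)
    {w : ℓ²(ℤ, ℝ)} (hw : ‖w‖ ≤ (1 - K) * r) (hT0 : ∀ n, |T 0 n| ≤ w n)
    (hT : ∀ f g : ℓ²(ℤ, ℝ), ‖f‖ ≤ r → ‖g‖ ≤ r → ∀ n,
      |T f n - T g n| ≤
        α * |f (n + 1) - g (n + 1)| + β * |f n - g n| + α * |f (n - 1) - g (n - 1)|) :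
    ∃ v : ℓ²(ℤ, ℝ), ‖v‖ ≤ r ∧ ∀ n, T v n = v n := by
  have hT' : ∀ f g : ℓ²(ℤ, ℝ), ‖f‖ ≤ r → ‖g‖ ≤ r → ∀ n,
      |T f n - T g n| ≤ lp.stencil α β (f - g) n := by
    intro f g hf hg n
    simpa only [lp.stencil_apply, lp.coeFn_sub, Pi.sub_apply] using hT f g hf hg n
  have hr : 0 ≤ r := nonneg_of_mul_nonneg_right ((norm_nonneg w).trans hw) (by linarith)
  have hmem (f : ℓ²(ℤ, ℝ)) (hf : ‖f‖ ≤ r) : Memℓp (T f) 2 :=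
    (lp.stencil α β f + w).2.mono fun n => by
      have h := hT' f 0 hf (by simpa using hr) n
      rw [lp.coeFn_zero, sub_zero] at h
      exact (norm_le_norm_sub_add _ (T 0 n)).trans (add_le_add h (hT0 n))
  classical
  -- the junk value `0` is never seen on the ball
  let T' : ℓ²(ℤ, ℝ) → ℓ²(ℤ, ℝ) := fun f => if h : Memℓp (T f) 2 then ⟨T f, h⟩ else 0
  have hT'apply (f : ℓ²(ℤ, ℝ)) (hf : ‖f‖ ≤ r) : ⇑(T' f) = T f := by
    simp only [T', dif_pos (hmem f hf)]
  have hK0 : 0 ≤ K := by linarith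
  have hT'0 : ‖T' 0‖ ≤ (1 - K.toNNReal) * r := by
    rw [Real.coe_toNNReal _ hK0]
    refine (lp.norm_mono two_ne_zero fun n => ?_).trans hw
    rw [hT'apply 0 (by simpa using hr)]
    exact (hT0 n).trans (le_abs_self _)
  have hT'lip : LipschitzOnWith K.toNNReal T' (closedBall 0 r) := by
    refine LipschitzOnWith.of_dist_le_mul fun f hf g hg => ?_
    rw [mem_closedBall_zero_iff] at hf hg
    rw [Real.coe_toNNReal _ hK0, dist_eq_norm, dist_eq_norm]
    calc ‖T' f - T' g‖ ≤ ‖lp.stencil α β (f - g)‖ := by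
          refine lp.norm_mono two_ne_zero fun n => ?_
          rw [lp.coeFn_sub, Pi.sub_apply, hT'apply f hf, hT'apply g hg]
          exact (hT' f g hf hg n).trans (le_abs_self _)
      _ ≤ (2 * α + β) * ‖f - g‖ := lp.norm_stencil_le hα hβ _
      _ ≤ K * ‖f - g‖ := by gcongr
  obtain ⟨v, hv, hfix⟩ := exists_fixedPoint_mem_closedBall (Real.toNNReal_lt_one.2 hK) hT'0 hT'lip
  rw [mem_closedBall_zero_iff] at hv
  refine ⟨v, hv, fun n => ?_⟩
  rw [← congrFun (hT'apply v hv) n, hfix]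

theorem abs_sub_sub_mul_le_of_lipschitzOnWith {φ φ' : ℝ → ℝ} (hφ : ∀ x, HasDerivAt φ (φ' x) x)
    {S : Set ℝ} (hS : Convex ℝ S) {M : ℝ≥0} (hM : LipschitzOnWith M φ' S) {x y z : ℝ}
    (hx : x ∈ S) (hy : y ∈ S) (hz : z ∈ S) :
    |φ y - φ z - φ' x * (y - z)| ≤ M * (|y - x| + |z - x|) * |y - z| := by
  have hsub : uIcc z y ⊆ S := by
    rw [← segment_eq_uIcc]; exact hS.segment_subset hz hy
  have hbound : ∀ w ∈ uIcc z y, ‖φ' w - φ' x‖ ≤ M * (|y - x| + |z - x|) := fun w hw => by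
    have hwx : |w - x| ≤ |y - x| + |z - x| := by
      rcases mem_uIcc.1 hw with ⟨h1, h2⟩ | ⟨h1, h2⟩ <;>
        rw [abs_le] <;> constructor <;>
        linarith [le_abs_self (y - x), neg_abs_le (y - x), le_abs_self (z - x), neg_abs_le (z - x)]
    calc ‖φ' w - φ' x‖ ≤ M * |w - x| := by
          simpa only [← dist_eq_norm, Real.dist_eq] using hM.dist_le_mul w (hsub hw) x hx
      _ ≤ _ := by gcongr
  have := (convex_uIcc z y).norm_image_sub_le_of_norm_hasDerivWithin_le
    (f := fun w => φ w - φ' x * w)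
    (fun w _ => ((hφ w).sub ((hasDerivAt_id w).const_mul (φ' x))).hasDerivWithinAt.congr_deriv
      (by simp)) hbound left_mem_uIcc right_mem_uIcc
  rw [Real.norm_eq_abs, Real.norm_eq_abs] at this
  calc |φ y - φ z - φ' x * (y - z)| = |φ y - φ' x * y - (φ z - φ' x * z)| := by ring_nf
    _ ≤ _ := this

def discreteLaplacian (u : ℤ → ℝ) (n : ℤ) : ℝ := u (n + 1) - 2 * u n + u (n - 1)

lemma abs_discreteLaplacian_le (u : ℤ → ℝ) (n : ℤ) :
    |discreteLaplacian u n| ≤ |u (n + 1)| + 2 * |u n| + |u (n - 1)| := by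
  unfold discreteLaplacian
  calc |u (n + 1) - 2 * u n + u (n - 1)| ≤ |u (n + 1) - 2 * u n| + |u (n - 1)| := abs_add_le ..
    _ ≤ |u (n + 1)| + |2 * u n| + |u (n - 1)| := by gcongr; exact abs_sub _ _
    _ = _ := by rw [abs_mul, abs_two]

/-- Newton's map for `ε Δu + φ(u) = 0` at `u₀ + v`, with the derivative frozen at `u₀`. -/
noncomputable def chordMap (φ φ' : ℝ → ℝ) (u₀ : ℤ → ℝ) (ε : ℝ) (v : ℤ → ℝ) (n : ℤ) : ℝ :=
  v n - (ε * discreteLaplacian (u₀ + v) n + φ (u₀ n + v n)) / φ' (u₀ n)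

section chordMap

variable {φ φ' : ℝ → ℝ} {u₀ : ℤ → ℝ} {ε c : ℝ}

lemma chordMap_eq_self_iff {v : ℤ → ℝ} {n : ℤ} (hn : φ' (u₀ n) ≠ 0) :
    chordMap φ φ' u₀ ε v n = v n ↔ ε * discreteLaplacian (u₀ + v) n + φ (u₀ n + v n) = 0 := by
  simp [chordMap, hn]

lemma abs_div_le_inv_mul_abs {x y : ℝ} (hc : 0 < c) (hy : c ≤ |y|) : |x / y| ≤ c⁻¹ * |x| := by
  rw [abs_div, div_eq_inv_mul]
  gcongr

lemma abs_chordMap_zero_le (hc : 0 < c) (hε : 0 ≤ ε) {n : ℤ} (hzero : φ (u₀ n) = 0)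
    (hn : c ≤ |φ' (u₀ n)|) :
    |chordMap φ φ' u₀ ε 0 n| ≤ c⁻¹ * ε * (|u₀ (n + 1)| + 2 * |u₀ n| + |u₀ (n - 1)|) := by
  have h : chordMap φ φ' u₀ ε 0 n = -(ε * discreteLaplacian u₀ n / φ' (u₀ n)) := by
    simp [chordMap, hzero]
  rw [h, abs_neg]
  refine (abs_div_le_inv_mul_abs hc hn).trans ?_
  rw [abs_mul, abs_of_nonneg hε, mul_assoc]
  gcongr
  exact abs_discreteLaplacian_le u₀ n

lemma abs_chordMap_sub_chordMap_le (hc : 0 < c) (hε : 0 ≤ ε) {f g : ℤ → ℝ} {n : ℤ}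
    (hn : c ≤ |φ' (u₀ n)|) {ρ : ℝ}
    (hρ : |φ (u₀ n + f n) - φ (u₀ n + g n) - φ' (u₀ n) * (f n - g n)| ≤ ρ * |f n - g n|) :
    |chordMap φ φ' u₀ ε f n - chordMap φ φ' u₀ ε g n| ≤
      c⁻¹ * ε * |f (n + 1) - g (n + 1)| + c⁻¹ * (2 * ε + ρ) * |f n - g n|
        + c⁻¹ * ε * |f (n - 1) - g (n - 1)| := by
  have hne : φ' (u₀ n) ≠ 0 := abs_pos.1 (hc.trans_le hn)
  have h : chordMap φ φ' u₀ ε f n - chordMap φ φ' u₀ ε g n =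
      -((ε * discreteLaplacian (f - g) n
        + (φ (u₀ n + f n) - φ (u₀ n + g n) - φ' (u₀ n) * (f n - g n))) / φ' (u₀ n)) := by
    simp only [chordMap, discreteLaplacian, Pi.add_apply, Pi.sub_apply]
    field_simp
    ring
  have hΔ := abs_discreteLaplacian_le (f - g) n
  simp only [Pi.sub_apply] at hΔ
  calc |chordMap φ φ' u₀ ε f n - chordMap φ φ' u₀ ε g n|
      ≤ c⁻¹ * (ε * |discreteLaplacian (f - g) n| + ρ * |f n - g n|) := by
        rw [h, abs_neg]
        refine (abs_div_le_inv_mul_abs hc hn).trans ?_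
        gcongr
        refine (abs_add_le _ _).trans ?_
        rw [abs_mul, abs_of_nonneg hε]
        gcongr
    _ ≤ _ := by
        have := mul_le_mul_of_nonneg_left hΔ hε
        have hc' := inv_nonneg.2 hc.le
        nlinarith

end chordMap

lemma abs_chordMap_sub_chordMap_le_of_norm_le {φ φ' : ℝ → ℝ} (hφ : ∀ x, HasDerivAt φ (φ' x) x)
    (u₀ : ℓ²(ℤ, ℝ)) {M : ℝ≥0} (hM : LipschitzOnWith M φ' (closedBall 0 (‖u₀‖ + 1)))
    {c ε r : ℝ} (hc : 0 < c) (hε : 0 ≤ ε) (hr : r ≤ 1) (hnondeg : ∀ n, c ≤ |φ' (u₀ n)|)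
    {f g : ℓ²(ℤ, ℝ)} (hf : ‖f‖ ≤ r) (hg : ‖g‖ ≤ r) (n : ℤ) :
    |chordMap φ φ' u₀ ε f n - chordMap φ φ' u₀ ε g n| ≤
      c⁻¹ * ε * |f (n + 1) - g (n + 1)| + c⁻¹ * (2 * ε + 2 * M * r) * |f n - g n|
        + c⁻¹ * ε * |f (n - 1) - g (n - 1)| := by
  have hball {h : ℓ²(ℤ, ℝ)} (hh : ‖h‖ ≤ r) : u₀ n + h n ∈ closedBall 0 (‖u₀‖ + 1) := by
    rw [mem_closedBall_zero_iff, Real.norm_eq_abs]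
    linarith [abs_add_le (u₀ n) (h n), lp.abs_apply_le_norm u₀ n, lp.abs_apply_le_norm h n]
  have hu₀ : u₀ n ∈ closedBall 0 (‖u₀‖ + 1) := by
    simpa using hball (h := 0) (by simpa using (norm_nonneg f).trans hf)
  refine abs_chordMap_sub_chordMap_le hc hε (hnondeg n) ?_
  have h := abs_sub_sub_mul_le_of_lipschitzOnWith hφ (convex_closedBall 0 _) hM hu₀
    (hball hf) (hball hg)
  simp only [add_sub_cancel_left, add_sub_add_left_eq_sub] at h
  calc _ ≤ M * (r + r) * |f n - g n| := by
        refine h.trans ?_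
        gcongr
        · exact (lp.abs_apply_le_norm f n).trans hf
        · exact (lp.abs_apply_le_norm g n).trans hg
    _ = 2 * M * r * |f n - g n| := by ring

theorem exists_solution_near_of_nondegenerate_zeros {φ φ' : ℝ → ℝ}
    (hφ : ∀ x, HasDerivAt φ (φ' x) x) (hφ' : LocallyLipschitz φ') (u₀ : ℓ²(ℤ, ℝ))
    (hzero : ∀ n, φ (u₀ n) = 0) {c : ℝ} (hc : 0 < c) (hnondeg : ∀ n, c ≤ |φ' (u₀ n)|) :
    ∃ C₀ > 0, ∀ᶠ ε in 𝓝[>] 0, ∃ v : ℓ²(ℤ, ℝ), ‖v‖ ≤ C₀ * ε ∧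
      ∀ n, ε * discreteLaplacian (⇑u₀ + ⇑v) n + φ (u₀ n + v n) = 0 := by
  obtain ⟨M, hM⟩ := (hφ'.locallyLipschitzOn (s := closedBall 0 (‖u₀‖ + 1))
    ).exists_lipschitzOnWith_of_compact (isCompact_closedBall 0 _)
  -- the chord map moves `0` by at most `4 ε ‖u₀‖ / c`, half the radius `C₀ ε`
  set C₀ := 8 * (‖u₀‖ + 1) / c
  have hC₀ : 0 < C₀ := by positivity
  have hlin (L b : ℝ) (hb : 0 < b) : ∀ᶠ ε in 𝓝[>] (0 : ℝ), L * ε ≤ b :=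
    nhdsWithin_le_nhds <|
      ((continuous_const_mul L).tendsto' 0 0 (mul_zero L)).eventually (eventually_le_nhds hb)
  refine ⟨C₀, hC₀, ?_⟩
  filter_upwards [self_mem_nhdsWithin, hlin C₀ 1 one_pos,
    hlin (4 + 2 * M * C₀) (c / 2) (by positivity)] with ε (hε : 0 < ε) hr1 hsmall
  have hw : ‖lp.stencil (c⁻¹ * ε) (2 * (c⁻¹ * ε)) u₀‖ ≤ (1 - 2⁻¹) * (C₀ * ε) := by
    refine (lp.norm_stencil_le (by positivity) (by positivity) u₀).trans ?_
    simp only [C₀]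
    field_simp
    nlinarith [norm_nonneg u₀]
  have hT0 (n : ℤ) : |chordMap φ φ' u₀ ε 0 n| ≤ lp.stencil (c⁻¹ * ε) (2 * (c⁻¹ * ε)) u₀ n := by
    rw [lp.stencil_apply]
    refine (abs_chordMap_zero_le hc hε.le (hzero n) (hnondeg n)).trans_eq ?_
    ring
  have hαβ : 2 * (c⁻¹ * ε) + c⁻¹ * (2 * ε + 2 * M * (C₀ * ε)) ≤ 2⁻¹ := by
    rw [show 2 * (c⁻¹ * ε) + c⁻¹ * (2 * ε + 2 * M * (C₀ * ε)) = c⁻¹ * ((4 + 2 * M * C₀) * ε)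
      by ring, inv_mul_le_iff₀ hc]
    linarith
  obtain ⟨v, hv, hfix⟩ := exists_lp_fixedPoint_of_abs_sub_le (by positivity) (by positivity)
    (by norm_num) hαβ hw hT0 fun f g hf hg n =>
      abs_chordMap_sub_chordMap_le_of_norm_le hφ u₀ hM hc hε.le hr1 hnondeg hf hg n
  exact ⟨v, hv, fun n =>
    (chordMap_eq_self_iff (abs_pos.1 (hc.trans_le (hnondeg n)))).1 (hfix n)⟩

lemma hasDerivAt_abs_pow_mul {m : ℕ} (hm : 1 ≤ m) (x : ℝ) :
    HasDerivAt (fun y : ℝ => |y| ^ m * y) ((m + 1) * |x| ^ m) x := by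
  rcases lt_trichotomy x 0 with hx | rfl | hx
  · have h := ((hasDerivAt_pow (m + 1) (-x)).comp x (hasDerivAt_neg x)).neg
    refine (h.congr_of_eventuallyEq ?_).congr_deriv ?_
    · filter_upwards [Iio_mem_nhds hx] with y (hy : y < 0)
      simp [abs_of_neg hy, pow_succ]
    · simp [abs_of_neg hx]
  · rw [hasDerivAt_iff_isLittleO_nhds_zero]
    have h : (fun y : ℝ => |y| ^ m) =o[𝓝 0] fun _ => (1 : ℝ) :=
      isLittleO_one_iff ℝ |>.2 <| (continuous_abs.pow m).tendsto' 0 0 <| by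
        simp [zero_pow (by omega : m ≠ 0)]
    simpa [zero_pow (by omega : m ≠ 0)] using h.mul_isBigO (isBigO_refl (fun y : ℝ => y) _)
  · have h := hasDerivAt_pow (m + 1) x
    refine (h.congr_of_eventuallyEq ?_).congr_deriv ?_
    · filter_upwards [Ioi_mem_nhds hx] with y (hy : 0 < y)
      simp [abs_of_pos hy, pow_succ]
    · simp [abs_of_pos hx]

/-- With `m = p - 1` and `k = q - 1` the stationary DNLS equation reads
`ε Δu + dnlsNonlin m k γ u = 0`. -/
noncomputable def dnlsNonlin (m k : ℕ) (γ x : ℝ) : ℝ := -x + |x| ^ m * x - γ * (|x| ^ k * x)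

noncomputable def dnlsNonlinDeriv (m k : ℕ) (γ x : ℝ) : ℝ :=
  -1 + (m + 1) * |x| ^ m - γ * ((k + 1) * |x| ^ k)

section dnlsNonlin

variable {m k : ℕ} {γ : ℝ}

lemma hasDerivAt_dnlsNonlin (hm : 1 ≤ m) (hk : 1 ≤ k) (x : ℝ) :
    HasDerivAt (dnlsNonlin m k γ) (dnlsNonlinDeriv m k γ x) x :=
  ((hasDerivAt_neg x).add (hasDerivAt_abs_pow_mul hm x)).sub
    ((hasDerivAt_abs_pow_mul hk x).const_mul γ)

lemma locallyLipschitz_dnlsNonlinDeriv : LocallyLipschitz (dnlsNonlinDeriv m k γ) := by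
  have hP : ContDiff ℝ 1 fun t : ℝ => -1 + (m + 1) * t ^ m - γ * ((k + 1) * t ^ k) := by
    fun_prop
  exact hP.locallyLipschitz.comp (lipschitzWith_one_norm (E := ℝ)).locallyLipschitz

lemma dnlsNonlin_neg (x : ℝ) : dnlsNonlin m k γ (-x) = -dnlsNonlin m k γ x := by
  simp only [dnlsNonlin, abs_neg]; ring

lemma dnlsNonlinDeriv_neg (x : ℝ) : dnlsNonlinDeriv m k γ (-x) = dnlsNonlinDeriv m k γ x := by
  simp only [dnlsNonlinDeriv, abs_neg]

lemma dnlsNonlin_of_root {x : ℝ} (hx : 0 ≤ x) (h : 1 - x ^ m + γ * x ^ k = 0) :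
    dnlsNonlin m k γ x = 0 := by
  rw [dnlsNonlin, abs_of_nonneg hx]
  linear_combination -x * h

lemma dnlsNonlinDeriv_of_root (hmk : m ≤ k) {x : ℝ} (hx : 0 ≤ x) (h : 1 - x ^ m + γ * x ^ k = 0) :
    dnlsNonlinDeriv m k γ x = x ^ m * (m - γ * k * x ^ (k - m)) := by
  have hsplit : x ^ k = x ^ m * x ^ (k - m) := by rw [← pow_add, Nat.add_sub_cancel' hmk]
  rw [dnlsNonlinDeriv, abs_of_nonneg hx]
  linear_combination -h - γ * k * hsplit

lemma dnlsNonlinDeriv_pos_and_neg_at_roots (hm : 1 ≤ m) (hmk : m < k) (hγ : 0 < γ) {a A : ℝ}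
    (ha : 0 < a) (haA : a < A) (hroota : 1 - a ^ m + γ * a ^ k = 0)
    (hrootA : 1 - A ^ m + γ * A ^ k = 0) :
    0 < dnlsNonlinDeriv m k γ a ∧ dnlsNonlinDeriv m k γ A < 0 := by
  obtain ⟨ξ, ⟨haξ, hξA⟩, hξ⟩ := exists_hasDerivAt_eq_zero (f := fun u : ℝ => u ^ m - γ * u ^ k)
    haA (by fun_prop) (by linear_combination hrootA - hroota)
    fun u _ => (hasDerivAt_pow m u).sub ((hasDerivAt_pow k u).const_mul γ)
  have hξ0 : 0 < ξ := ha.trans haξ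
  have hcrit : (m : ℝ) = γ * k * ξ ^ (k - m) := by
    have hsplit : ξ ^ (k - 1) = ξ ^ (m - 1) * ξ ^ (k - m) := by
      rw [← pow_add]; congr 1; omega
    refine mul_left_cancel₀ (pow_pos hξ0 (m - 1)).ne' ?_
    linear_combination hξ + γ * k * hsplit
  have hγk : 0 < γ * k := mul_pos hγ (by exact_mod_cast (by omega : 0 < k))
  have hkm : k - m ≠ 0 := by omega
  rw [dnlsNonlinDeriv_of_root hmk.le ha.le hroota,
    dnlsNonlinDeriv_of_root hmk.le (ha.trans haA).le hrootA, hcrit]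
  constructor
  · exact mul_pos (pow_pos ha m) (sub_pos.2 (by gcongr))
  · exact mul_neg_of_pos_of_neg (pow_pos (ha.trans haA) m) (sub_neg.2 (by gcongr))

lemma exists_nondegenerate_zeros_dnlsNonlin (hm : 1 ≤ m) (hmk : m < k) (hγ : 0 < γ) {a A : ℝ}
    (ha : 0 < a) (haA : a < A) (hroota : 1 - a ^ m + γ * a ^ k = 0)
    (hrootA : 1 - A ^ m + γ * A ^ k = 0) :
    ∃ c > 0, ∀ x, (x = 0 ∨ x = a ∨ x = -a ∨ x = A ∨ x = -A) →
      dnlsNonlin m k γ x = 0 ∧ c ≤ |dnlsNonlinDeriv m k γ x| := by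
  obtain ⟨hda, hdA⟩ := dnlsNonlinDeriv_pos_and_neg_at_roots hm hmk hγ ha haA hroota hrootA
  have hA : 0 < A := ha.trans haA
  set c := min 1 (min (dnlsNonlinDeriv m k γ a) (-dnlsNonlinDeriv m k γ A))
  refine ⟨c, lt_min one_pos (lt_min hda (neg_pos.2 hdA)), ?_⟩
  have h0 : dnlsNonlin m k γ 0 = 0 ∧ c ≤ |dnlsNonlinDeriv m k γ 0| := by
    simp [dnlsNonlin, dnlsNonlinDeriv, zero_pow (by omega : m ≠ 0), zero_pow (by omega : k ≠ 0), c]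
  have ha' : dnlsNonlin m k γ a = 0 ∧ c ≤ |dnlsNonlinDeriv m k γ a| :=
    ⟨dnlsNonlin_of_root ha.le hroota,
      (abs_of_pos hda).symm ▸ (min_le_right _ _).trans (min_le_left _ _)⟩
  have hA' : dnlsNonlin m k γ A = 0 ∧ c ≤ |dnlsNonlinDeriv m k γ A| :=
    ⟨dnlsNonlin_of_root hA.le hrootA,
      (abs_of_neg hdA).symm ▸ (min_le_right _ _).trans (min_le_right _ _)⟩
  have hneg {y : ℝ} (hy : dnlsNonlin m k γ y = 0 ∧ c ≤ |dnlsNonlinDeriv m k γ y|) :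
      dnlsNonlin m k γ (-y) = 0 ∧ c ≤ |dnlsNonlinDeriv m k γ (-y)| := by
    rwa [dnlsNonlin_neg, dnlsNonlinDeriv_neg, neg_eq_zero]
  rintro x (rfl | rfl | rfl | rfl | rfl)
  exacts [h0, ha', hneg ha', hA', hneg hA']

end dnlsNonlin

lemma limitSeq_eq_zero_or_exists (N : ℕ) (ut : Fin N → ℝ) (n : ℤ) :
    limitSeq N ut n = 0 ∨ ∃ i, limitSeq N ut n = ut i := by
  unfold limitSeq extFin
  split_ifs <;> simp

lemma memℓp_limitSeq (N : ℕ) (ut : Fin N → ℝ) : Memℓp (limitSeq N ut) 2 := by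
  refine (memℓp_zero ((Set.finite_Icc (1 : ℤ) N).subset fun n hn => ?_)).of_exponent_ge bot_le
  by_contra h
  exact hn (if_neg h)

theorem exists_ILM_near_ACL_general (p q : ℕ) (hp : 2 ≤ p) (hpq : p < q)
    (γ : ℝ) (hγ0 : 0 < γ)
    (a A : ℝ) (ha : 0 < a) (haA : a < A)
    (hroota : 1 - a ^ (p - 1) + γ * a ^ (q - 1) = 0)
    (hrootA : 1 - A ^ (p - 1) + γ * A ^ (q - 1) = 0)
    (N : ℕ) (ut : Fin N → ℝ)
    (hut : ∀ n, ut n = a ∨ ut n = -a ∨ ut n = A ∨ ut n = -A) :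
    ∃ ε₀ > (0 : ℝ), ∃ C₀ > (0 : ℝ), ∀ ε : ℝ, 0 < ε → ε < ε₀ →
      ∃ u : ℤ → ℝ,
        (∀ n : ℤ, ε * (u (n + 1) - 2 * u n + u (n - 1)) - u n
          + |u n| ^ (p - 1) * u n - γ * |u n| ^ (q - 1) * u n = 0) ∧
        Summable (fun n : ℤ => (u n) ^ 2) ∧
        Summable (fun n : ℤ => (u n - limitSeq N ut n) ^ 2) ∧
        Real.sqrt (∑' n : ℤ, (u n - limitSeq N ut n) ^ 2) ≤ C₀ * ε := by
  obtain ⟨c, hc, hzeros⟩ := exists_nondegenerate_zeros_dnlsNonlin (m := p - 1) (k := q - 1)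
    (by omega) (by omega) hγ0 ha haA hroota hrootA
  let u₀ : ℓ²(ℤ, ℝ) := ⟨limitSeq N ut, memℓp_limitSeq N ut⟩
  have hu₀ : ⇑u₀ = limitSeq N ut := rfl
  have hvalues (n : ℤ) : u₀ n = 0 ∨ u₀ n = a ∨ u₀ n = -a ∨ u₀ n = A ∨ u₀ n = -A := by
    rcases limitSeq_eq_zero_or_exists N ut n with h | ⟨i, h⟩ <;> rw [hu₀, h]
    exacts [Or.inl rfl, Or.inr (hut i)]
  obtain ⟨C₀, hC₀, hsmall⟩ := exists_solution_near_of_nondegenerate_zeros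
    (hasDerivAt_dnlsNonlin (by omega) (by omega)) locallyLipschitz_dnlsNonlinDeriv u₀
    (fun n => (hzeros _ (hvalues n)).1) hc (fun n => (hzeros _ (hvalues n)).2)
  obtain ⟨ε₀, hε₀, hsub⟩ := mem_nhdsGT_iff_exists_Ioo_subset.1 hsmall
  refine ⟨ε₀, hε₀, C₀, hC₀, fun ε hε hεε₀ => ?_⟩
  obtain ⟨v, hv, hsol⟩ := hsub ⟨hε, hεε₀⟩
  refine ⟨⇑u₀ + ⇑v, fun n => ?_, ?_, ?_, ?_⟩
  · have h := hsol n
    simp only [discreteLaplacian, dnlsNonlin, Pi.add_apply] at h ⊢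
    linear_combination h
  · exact memℓp_two_iff_summable_sq.1 (u₀ + v).2
  · show Summable fun n => (u₀ n + v n - u₀ n) ^ 2
    simpa using memℓp_two_iff_summable_sq.1 v.2
  · show √(∑' n, (u₀ n + v n - u₀ n) ^ 2) ≤ C₀ * ε
    simpa [lp.norm_two_eq_sqrt_tsum] using hv

/-- Existence of intrinsic localized modes near the anticontinuum limit: for the codes
with entries in `{a, −a, A, −A}` there is, for every small enough `ε > 0`, a real
ℓ²(ℤ) solution of the stationary DNLS equation within `C₀ ε` of the limiting sequence. -/
theorem exists_ILM_near_ACL (p q : ℕ) (hp : 2 ≤ p) (hpq : p < q)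
    (γ : ℝ) (hγ0 : 0 < γ) (hγ : γ < gammaCrit p q)
    (a A : ℝ) (ha : 0 < a) (haA : a < A)
    (hroota : 1 - a ^ (p - 1) + γ * a ^ (q - 1) = 0)
    (hrootA : 1 - A ^ (p - 1) + γ * A ^ (q - 1) = 0)
    (N : ℕ) (hN : 1 ≤ N) (ut : Fin N → ℝ)
    (hut : ∀ n, ut n = a ∨ ut n = -a ∨ ut n = A ∨ ut n = -A) :
    ∃ ε₀ > (0 : ℝ), ∃ C₀ > (0 : ℝ), ∀ ε : ℝ, 0 < ε → ε < ε₀ →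
      ∃ u : ℤ → ℝ,
        (∀ n : ℤ, ε * (u (n + 1) - 2 * u n + u (n - 1)) - u n
          + |u n| ^ (p - 1) * u n - γ * |u n| ^ (q - 1) * u n = 0) ∧
        Summable (fun n : ℤ => (u n) ^ 2) ∧
        Summable (fun n : ℤ => (u n - limitSeq N ut n) ^ 2) ∧
        Real.sqrt (∑' n : ℤ, (u n - limitSeq N ut n) ^ 2) ≤ C₀ * ε :=
  exists_ILM_near_ACL_general p q hp hpq γ hγ0 a A ha haA hroota hrootA N ut hut
end

section
/- Let N ≥ 1 and let ũ ∈ ℝ^N have all entries nonzero. Then the N×N symmetric tridiagonal matrix L̃⁻ satisfies L̃⁻ũ = 0; moreover 0 is a simple eigenvalue of L̃⁻ (a simple root of its characteristic polynomial), L̃⁻ has exactly N₀(ũ) negative eigenvalues counted with multiplicity, and exactly N − N₀(ũ) − 1 positive eigenvalues counted with multiplicity. -/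
/-!
The quadratic form of `L̃⁻` is a weighted sum of squares,
`vᵀ L̃⁻ v = ∑ₖ ũₖ ũₖ₊₁ (vₖ / ũₖ - vₖ₊₁ / ũₖ₊₁)²` (with `ũ_{N+1} = 0`), that is `L̃⁻ = Qᵀ D Q` with
`Q` upper bidiagonal and invertible and `D = diag (ũₖ ũₖ₊₁)`. As `Q ũ` is supported on the last
coordinate, where `D` vanishes, `L̃⁻ ũ = 0`. Being symmetric, `L̃⁻` is also `Pᵀ diag (λ) P` with `P`
orthogonal, so by Sylvester's law of inertia the eigenvalues `λ` and the weights `ũₖ ũₖ₊₁` have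
equally many positive, negative and zero entries. Exactly one weight vanishes, the last one, and
the negative weights are the sign alternations of `ũ`.
-/

/-- Extension of a vector `Fin N → ℝ` to `ℤ` by zero (0-indexed). -/
def extZ (N : ℕ) (ut : Fin N → ℝ) : ℤ → ℝ :=
  fun k => if h : 0 ≤ k ∧ k < (N : ℤ) then ut ⟨k.toNat, by omega⟩ else 0

/-- The `N×N` symmetric tridiagonal matrix `L̃⁻` with diagonal entries
`(ũ_{n−1} + ũ_{n+1})/ũ_n` (with the convention `ũ₀ = ũ_{N+1} = 0`) and `−1` on the
sub- and super-diagonal. -/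
noncomputable def Lminus (N : ℕ) (ut : Fin N → ℝ) : Matrix (Fin N) (Fin N) ℝ :=
  fun i j =>
    if i = j then (extZ N ut (((i : ℕ) : ℤ) - 1) + extZ N ut (((i : ℕ) : ℤ) + 1)) / ut i
    else if (((i : ℕ) : ℤ) - ((j : ℕ) : ℤ)).natAbs = 1 then -1 else 0

/-- The number `N₀(ũ)` of sign alternations of `ũ`. -/
noncomputable def nFlips (N : ℕ) (ut : Fin N → ℝ) : ℕ :=
  ((Finset.range (N - 1)).filter
    (fun i => (if h : i < N then ut ⟨i, h⟩ else 0) *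
              (if h : i + 1 < N then ut ⟨i + 1, h⟩ else 0) < 0)).card

open Matrix Finset

theorem card_pos_add_card_neg_add_card_zero_eq_card {ι : Type*} [Fintype ι] (a : ι → ℝ) :
    #{i | 0 < a i} + #{i | a i < 0} + #{i | a i = 0} = Fintype.card ι := by
  classical
  rw [← card_union_of_disjoint, ← filter_or, ← card_union_of_disjoint, ← filter_or,
    filter_true_of_mem fun i _ ↦ ?_, card_univ]
  · rcases lt_trichotomy (a i) 0 with h | h | h <;> simp [h]
  all_goals exact disjoint_filter.2 fun i _ ↦ by grind

theorem dotProduct_transpose_mul_diagonal_mul_mulVec {ι κ : Type*} [Fintype ι] [Fintype κ]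
    [DecidableEq κ] (a : κ → ℝ) (P : Matrix κ ι ℝ) (x : ι → ℝ) :
    x ⬝ᵥ (Pᵀ * diagonal a * P) *ᵥ x = ∑ k, a k * (P *ᵥ x) k ^ 2 := by
  rw [← mulVec_mulVec, ← mulVec_mulVec, dotProduct_mulVec, vecMul_transpose, dotProduct]
  simp only [mulVec_diagonal]
  exact sum_congr rfl fun k _ ↦ by ring

theorem card_pos_le_of_sum_mul_sq_eq {ι κ : Type*} [Fintype ι] [Fintype κ] (a : ι → ℝ)
    (b : κ → ℝ) (P : Matrix κ ι ℝ)
    (h : ∀ x, ∑ i, a i * x i ^ 2 = ∑ k, b k * (P *ᵥ x) k ^ 2) :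
    #{i | 0 < a i} ≤ #{k | 0 < b k} := by
  -- A vector supported where `a > 0` whose image vanishes where `b > 0` makes the left side
  -- `≥ 0` and the right side `≤ 0`, so it is zero.
  let φ := LinearMap.funLeft ℝ ℝ (Subtype.val : {k // 0 < b k} → κ) ∘ₗ P.mulVecLin ∘ₗ
    Function.ExtendByZero.linearMap ℝ (Subtype.val : {i // 0 < a i} → ι)
  suffices hφ : Function.Injective φ by
    simpa [Fintype.card_subtype] using LinearMap.finrank_le_finrank_of_injective hφ
  refine (injective_iff_map_eq_zero φ).2 fun x hx ↦ ?_
  set y := Function.extend Subtype.val x 0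
  have hPy : ∀ k, 0 < b k → (P *ᵥ y) k = 0 := fun k hk ↦ congrFun hx ⟨k, hk⟩
  have hy_out : ∀ i, ¬ 0 < a i → y i = 0 := fun i hi ↦
    Function.extend_apply' _ _ _ fun ⟨j, hj⟩ ↦ hi (hj ▸ j.2)
  have hterm : ∀ i ∈ univ, 0 ≤ a i * y i ^ 2 := fun i _ ↦ by
    by_cases hi : 0 < a i
    · positivity
    · simp [hy_out i hi]
  have hsum : ∑ i, a i * y i ^ 2 = 0 := by
    refine le_antisymm ?_ (sum_nonneg hterm)
    rw [h y]
    refine sum_nonpos fun k _ ↦ ?_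
    by_cases hk : 0 < b k
    · simp [hPy k hk]
    · exact mul_nonpos_of_nonpos_of_nonneg (not_lt.1 hk) (sq_nonneg _)
  funext j
  have hyj : y j = x j := Subtype.val_injective.extend_apply x 0 j
  simpa [j.2.ne', hyj] using (sum_eq_zero_iff_of_nonneg hterm).1 hsum j (mem_univ _)

theorem card_pos_le_of_transpose_mul_diagonal_mul_eq {ι κ : Type*} [Fintype ι] [Fintype κ]
    [DecidableEq ι] [DecidableEq κ] {a : ι → ℝ} {b : κ → ℝ} {P : Matrix ι ι ℝ}
    {Q : Matrix κ ι ℝ} (hP : IsUnit P.det) (h : Pᵀ * diagonal a * P = Qᵀ * diagonal b * Q) :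
    #{i | 0 < a i} ≤ #{k | 0 < b k} := by
  refine card_pos_le_of_sum_mul_sq_eq a b (Q * P⁻¹) fun x ↦ ?_
  calc ∑ i, a i * x i ^ 2 = ∑ i, a i * (P *ᵥ P⁻¹ *ᵥ x) i ^ 2 := by
        rw [mulVec_mulVec, mul_nonsing_inv _ hP, one_mulVec]
    _ = P⁻¹ *ᵥ x ⬝ᵥ (Pᵀ * diagonal a * P) *ᵥ P⁻¹ *ᵥ x :=
        (dotProduct_transpose_mul_diagonal_mul_mulVec a P _).symm
    _ = ∑ k, b k * ((Q * P⁻¹) *ᵥ x) k ^ 2 := by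
        rw [h, dotProduct_transpose_mul_diagonal_mul_mulVec, mulVec_mulVec]

section Inertia

variable {ι : Type*} [Fintype ι] [DecidableEq ι] {a b : ι → ℝ} {P Q : Matrix ι ι ℝ}

theorem card_pos_eq_of_transpose_mul_diagonal_mul_eq (hP : IsUnit P.det) (hQ : IsUnit Q.det)
    (h : Pᵀ * diagonal a * P = Qᵀ * diagonal b * Q) : #{i | 0 < a i} = #{i | 0 < b i} :=
  (card_pos_le_of_transpose_mul_diagonal_mul_eq hP h).antisymm
    (card_pos_le_of_transpose_mul_diagonal_mul_eq hQ h.symm)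

theorem card_neg_eq_of_transpose_mul_diagonal_mul_eq (hP : IsUnit P.det) (hQ : IsUnit Q.det)
    (h : Pᵀ * diagonal a * P = Qᵀ * diagonal b * Q) : #{i | a i < 0} = #{i | b i < 0} := by
  simpa using card_pos_eq_of_transpose_mul_diagonal_mul_eq (a := -a) (b := -b) hP hQ
    (by simp only [Pi.neg_def, ← diagonal_neg, mul_neg, neg_mul, h])

theorem card_eq_zero_eq_of_transpose_mul_diagonal_mul_eq (hP : IsUnit P.det) (hQ : IsUnit Q.det)
    (h : Pᵀ * diagonal a * P = Qᵀ * diagonal b * Q) : #{i | a i = 0} = #{i | b i = 0} := by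
  have := card_pos_add_card_neg_add_card_zero_eq_card a
  have := card_pos_add_card_neg_add_card_zero_eq_card b
  have := card_pos_eq_of_transpose_mul_diagonal_mul_eq hP hQ h
  have := card_neg_eq_of_transpose_mul_diagonal_mul_eq hP hQ h
  omega

end Inertia

theorem Matrix.IsHermitian.card_filter_roots_charpoly {ι : Type*} [Fintype ι] [DecidableEq ι]
    {A : Matrix ι ι ℝ} (hA : A.IsHermitian) (p : ℝ → Prop) [DecidablePred p] :
    (A.charpoly.roots.filter p).card = #{i | p (hA.eigenvalues i)} := by
  rw [hA.roots_charpoly_eq_eigenvalues, Multiset.filter_map, Multiset.card_map]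
  rfl

theorem Matrix.IsHermitian.exists_eq_transpose_mul_diagonal_eigenvalues_mul {ι : Type*}
    [Fintype ι] [DecidableEq ι] {A : Matrix ι ι ℝ} (hA : A.IsHermitian) :
    ∃ P : Matrix ι ι ℝ, IsUnit P.det ∧ A = Pᵀ * diagonal hA.eigenvalues * P := by
  refine ⟨star (hA.eigenvectorUnitary : Matrix ι ι ℝ), ?_, ?_⟩
  · exact UnitaryGroup.det_isUnit (star hA.eigenvectorUnitary)
  · conv_lhs => rw [hA.spectral_theorem, Unitary.conjStarAlgAut_apply]
    simp [star_eq_conjTranspose]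

section extZ

variable {N : ℕ} (f : Fin N → ℝ)

theorem sum_ite_coe_eq_extZ (m : ℤ) :
    ∑ k : Fin N, (if ((k : ℕ) : ℤ) = m then f k else 0) = extZ N f m := by
  by_cases hm : 0 ≤ m ∧ m < N
  · rw [extZ, dif_pos hm, Fintype.sum_eq_single ⟨m.toNat, by omega⟩, if_pos (by simp; omega)]
    exact fun k hk ↦ if_neg fun h ↦ hk (Fin.ext (by simp; omega))
  · rw [extZ, dif_neg hm]
    exact sum_eq_zero fun k _ ↦ if_neg (by omega)

theorem extZ_coe (i : Fin N) : extZ N f ((i : ℕ) : ℤ) = f i := by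
  simp [← sum_ite_coe_eq_extZ, Fin.val_inj]

theorem extZ_congr {g : Fin N → ℝ} {m : ℤ} (h : ∀ k : Fin N, ((k : ℕ) : ℤ) = m → f k = g k) :
    extZ N f m = extZ N g m := by
  simp only [← sum_ite_coe_eq_extZ]
  exact sum_congr rfl fun k _ ↦ by split_ifs with hk <;> simp [h k, hk]

theorem extZ_neg (m : ℤ) : extZ N (-f) m = -extZ N f m := by
  unfold extZ
  split_ifs <;> simp

end extZ

section Lminus

variable (N : ℕ) (ut : Fin N → ℝ)

noncomputable def LminusFactor : Matrix (Fin N) (Fin N) ℝ :=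
  of fun k j ↦ if j = k then (ut j)⁻¹ else if ((j : ℕ) : ℤ) = (k : ℕ) + 1 then -(ut j)⁻¹ else 0

noncomputable def LminusWeight (k : Fin N) : ℝ :=
  ut k * extZ N ut ((k : ℕ) + 1)

variable {N ut}

theorem LminusFactor_apply_self (k : Fin N) : LminusFactor N ut k k = (ut k)⁻¹ := if_pos rfl

theorem LminusFactor_apply_of_eq_add_one {k j : Fin N} (h : (j : ℕ) = k + 1) :
    LminusFactor N ut k j = -(ut j)⁻¹ := by
  rw [LminusFactor, of_apply, if_neg (by omega), if_pos (by omega)]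

theorem LminusFactor_apply_of_lt {k j : Fin N} (h : j < k) : LminusFactor N ut k j = 0 := by
  rw [LminusFactor, of_apply, if_neg h.ne, if_neg (by omega)]

theorem LminusFactor_apply_of_add_one_lt {k j : Fin N} (h : (k : ℕ) + 1 < j) :
    LminusFactor N ut k j = 0 := by
  rw [LminusFactor, of_apply, if_neg (by omega), if_neg (by omega)]

theorem det_LminusFactor : (LminusFactor N ut).det = ∏ i, (ut i)⁻¹ := by
  rw [det_of_isUpperTriangular (M := LminusFactor N ut) fun _ _ h ↦ LminusFactor_apply_of_lt h]
  simp [LminusFactor_apply_self]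

theorem sum_LminusFactor_mul (g : Fin N → ℝ) (i : Fin N) :
    ∑ k, LminusFactor N ut k i * g k = (g i - extZ N g ((i : ℕ) - 1)) / ut i := by
  have hk : ∀ k, LminusFactor N ut k i * g k =
      (if k = i then g k / ut i else 0) -
        (if ((k : ℕ) : ℤ) = (i : ℕ) - 1 then g k / ut i else 0) := by
    intro k
    simp only [LminusFactor, of_apply, Fin.ext_iff]
    split_ifs <;> first | omega | ring
  simp only [hk, sum_sub_distrib, Fintype.sum_ite_eq', sub_div, ← sum_ite_coe_eq_extZ, sum_div,
    ite_div, zero_div]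

theorem LminusFactor_mulVec_self (hut : ∀ n, ut n ≠ 0) (k : Fin N) :
    (LminusFactor N ut *ᵥ ut) k = 1 - extZ N 1 ((k : ℕ) + 1) := by
  have hj : ∀ j, LminusFactor N ut k j * ut j =
      (if j = k then 1 else 0) - (if ((j : ℕ) : ℤ) = (k : ℕ) + 1 then 1 else 0) := by
    intro j
    simp only [LminusFactor, of_apply, Fin.ext_iff]
    split_ifs <;> first | omega | simp [hut j]
  simp only [mulVec, dotProduct, hj, sum_sub_distrib, Fintype.sum_ite_eq', ← sum_ite_coe_eq_extZ,
    Pi.one_apply]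

theorem diagonal_LminusWeight_mulVec_LminusFactor_mulVec_self (hut : ∀ n, ut n ≠ 0) :
    diagonal (LminusWeight N ut) *ᵥ (LminusFactor N ut *ᵥ ut) = 0 := by
  funext k
  rw [mulVec_diagonal, LminusFactor_mulVec_self hut, LminusWeight, Pi.zero_apply]
  unfold extZ
  split_ifs <;> simp

theorem Lminus_transpose : (Lminus N ut)ᵀ = Lminus N ut := by
  ext i j
  simp only [transpose_apply, Lminus, eq_comm (a := j)]
  split_ifs with h <;> first | subst h; rfl | omega | rfl

theorem Lminus_apply_of_le (hut : ∀ n, ut n ≠ 0) {i j : Fin N} (hij : i ≤ j) :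
    Lminus N ut i j =
      ((LminusFactor N ut)ᵀ * diagonal (LminusWeight N ut) * LminusFactor N ut) i j := by
  rw [Matrix.mul_assoc, mul_apply]
  simp only [transpose_apply, diagonal_mul, sum_LminusFactor_mul]
  rw [Fin.le_iff_val_le_val] at hij
  by_cases hji : j = i
  · subst hji
    have hprev : extZ N (fun k ↦ LminusWeight N ut k * LminusFactor N ut k j) ((j : ℕ) - 1) =
        -extZ N ut ((j : ℕ) - 1) := by
      rw [← extZ_neg]
      refine extZ_congr _ fun k hk ↦ ?_
      rw [LminusWeight, show ((k : ℕ) : ℤ) + 1 = (j : ℕ) by omega, extZ_coe,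
        LminusFactor_apply_of_eq_add_one (by omega)]
      field_simp [hut j]
      rfl
    rw [Lminus, if_pos rfl, hprev, LminusWeight, LminusFactor_apply_self]
    field_simp [hut j]
    ring
  have hprev : extZ N (fun k ↦ LminusWeight N ut k * LminusFactor N ut k j) ((i : ℕ) - 1) = 0 := by
    rw [extZ_congr _ (g := 0) fun k hk ↦ by
      rw [LminusFactor_apply_of_add_one_lt (by omega), mul_zero, Pi.zero_apply]]
    simp [extZ]
  rw [hprev, sub_zero, Lminus, if_neg (Ne.symm hji)]
  rcases (show (j : ℕ) = i + 1 ∨ (i : ℕ) + 1 < j by omega) with hnext | hfar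
  · rw [if_pos (by omega), LminusWeight, LminusFactor_apply_of_eq_add_one hnext,
      show ((i : ℕ) : ℤ) + 1 = (j : ℕ) by omega, extZ_coe]
    field_simp [hut i, hut j]
  · rw [if_neg (by omega), LminusFactor_apply_of_add_one_lt hfar, mul_zero, zero_div]

theorem Lminus_eq_transpose_mul_diagonal_mul (hut : ∀ n, ut n ≠ 0) :
    Lminus N ut = (LminusFactor N ut)ᵀ * diagonal (LminusWeight N ut) * LminusFactor N ut := by
  ext i j
  rcases le_total i j with hij | hji
  · exact Lminus_apply_of_le hut hij
  · have hsymm : ((LminusFactor N ut)ᵀ * diagonal (LminusWeight N ut) * LminusFactor N ut)ᵀ =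
        (LminusFactor N ut)ᵀ * diagonal (LminusWeight N ut) * LminusFactor N ut := by
      simp [transpose_mul, Matrix.mul_assoc]
    rw [← Lminus_transpose, transpose_apply, Lminus_apply_of_le hut hji]
    exact congrFun (congrFun hsymm i) j

theorem Lminus_mulVec_self (hut : ∀ n, ut n ≠ 0) : Lminus N ut *ᵥ ut = 0 := by
  rw [Lminus_eq_transpose_mul_diagonal_mul hut, ← mulVec_mulVec, ← mulVec_mulVec,
    diagonal_LminusWeight_mulVec_LminusFactor_mulVec_self hut, mulVec_zero]

theorem LminusWeight_eq_zero_iff (hut : ∀ n, ut n ≠ 0) (k : Fin N) :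
    LminusWeight N ut k = 0 ↔ (k : ℕ) + 1 = N := by
  have := k.2
  unfold LminusWeight extZ
  split_ifs with h
  · simp only [mul_eq_zero, hut, false_or, false_iff]
    omega
  · simp only [mul_zero, true_iff]
    omega

theorem card_LminusWeight_eq_zero (hN : 1 ≤ N) (hut : ∀ n, ut n ≠ 0) :
    #{k | LminusWeight N ut k = 0} = 1 := by
  rw [card_eq_one]
  refine ⟨⟨N - 1, by omega⟩, ?_⟩
  ext k
  simp only [mem_filter, mem_univ, true_and, mem_singleton, LminusWeight_eq_zero_iff hut,
    Fin.ext_iff]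
  omega

theorem LminusWeight_eq_nFlips_summand (k : Fin N) :
    LminusWeight N ut k = (if h : (k : ℕ) < N then ut ⟨k, h⟩ else 0) *
      (if h : (k : ℕ) + 1 < N then ut ⟨k + 1, h⟩ else 0) := by
  unfold LminusWeight extZ
  rw [dif_pos k.2]
  congr 1
  split_ifs <;> first | omega | rfl

theorem card_LminusWeight_neg : #{k | LminusWeight N ut k < 0} = nFlips N ut := by
  unfold nFlips
  refine card_bij (fun k _ ↦ (k : ℕ)) (fun k hk ↦ ?_) (fun _ _ _ _ ↦ Fin.ext) fun m hm ↦ ?_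
  · simp only [mem_filter, mem_univ, true_and, mem_range, LminusWeight_eq_nFlips_summand] at hk ⊢
    refine ⟨?_, hk⟩
    by_contra hlast
    rw [dif_neg (show ¬((k : ℕ) + 1 < N) by omega), mul_zero] at hk
    exact hk.false
  · simp only [mem_filter, mem_range] at hm
    refine ⟨⟨m, by omega⟩, ?_, rfl⟩
    rw [mem_filter, LminusWeight_eq_nFlips_summand]
    exact ⟨mem_univ _, hm.2⟩

end Lminus

/-- For `ũ ∈ ℝ^N` with all entries nonzero, the matrix `L̃⁻` satisfies `L̃⁻ũ = 0`;
`0` is a simple root of its characteristic polynomial; it has exactly `N₀(ũ)`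
negative eigenvalues and exactly `N − N₀(ũ) − 1` positive eigenvalues, counted with
multiplicity. -/
theorem Lminus_spectrum (N : ℕ) (hN : 1 ≤ N) (ut : Fin N → ℝ)
    (hut : ∀ n, ut n ≠ 0) :
    (Lminus N ut).mulVec ut = 0 ∧
    (Lminus N ut).charpoly.rootMultiplicity 0 = 1 ∧
    (((Lminus N ut).charpoly.roots.filter (fun x => x < 0)).card = nFlips N ut) ∧
    (((Lminus N ut).charpoly.roots.filter (fun x => 0 < x)).card = N - nFlips N ut - 1) := by
  classical
  have hA : (Lminus N ut).IsHermitian := by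
    rw [IsHermitian, conjTranspose_eq_transpose_of_trivial, Lminus_transpose]
  obtain ⟨P, hP, hAP⟩ := hA.exists_eq_transpose_mul_diagonal_eigenvalues_mul
  have hQ : IsUnit (LminusFactor N ut).det := by
    simpa [det_LminusFactor, isUnit_iff_ne_zero, prod_ne_zero_iff] using hut
  have hfac := hAP.symm.trans (Lminus_eq_transpose_mul_diagonal_mul hut)
  have hpos := card_pos_eq_of_transpose_mul_diagonal_mul_eq hP hQ hfac
  have hneg := card_neg_eq_of_transpose_mul_diagonal_mul_eq hP hQ hfac
  have hzero := card_eq_zero_eq_of_transpose_mul_diagonal_mul_eq hP hQ hfac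
  have htotal := card_pos_add_card_neg_add_card_zero_eq_card (LminusWeight N ut)
  rw [card_LminusWeight_neg, card_LminusWeight_eq_zero hN hut, Fintype.card_fin] at htotal
  refine ⟨Lminus_mulVec_self hut, ?_, ?_, ?_⟩
  · rw [← Polynomial.count_roots, Multiset.count_eq_card_filter_eq,
      hA.card_filter_roots_charpoly]
    simp_rw [eq_comm (a := (0 : ℝ))]
    rw [hzero, card_LminusWeight_eq_zero hN hut]
  · rw [hA.card_filter_roots_charpoly, hneg, card_LminusWeight_neg]
  · rw [hA.card_filter_roots_charpoly, hpos]
    omega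
end
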